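/- arXiv:2402.12013 — 7 statements merged into one kernel-verified Lean document; each statement's English description precedes it below -/
import Mathlib

section
/- Let λ be a partition of n with at most three columns (i.e., every part of λ is at most 3), and let ς = (s_1,...,s_d) be a composition of n with each s_i ∈ {1,2}. Then the map assigning to each column-strict Young tableau T of shape λ and content ς the sequence (r^T(i) - s_i)_{1≤i≤d}, where r^T(i) is the sum of the row numbers (counted from the top) of all boxes of T containing the entry i, is injective. -/
open Finset

/-- A tableau `T` has content `ς = (s 1, …, s d)`: the entry `k` appears `s k` times for
`k ∈ {1,…,d}`, and no other values occur in the diagram. -/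
def hasContent {μ : YoungDiagram} (T : SemistandardYoungTableau μ) (d : ℕ) (s : ℕ → ℕ) : Prop :=
  ∀ k : ℕ, (μ.cells.filter fun c => T c.1 c.2 = k).card =
    if k ∈ Finset.Icc 1 d then s k else 0

/-- `rowSum T i` is the sum of the row numbers (counted from the top, starting at 1) of all
boxes of `T` containing the entry `i`. -/
def rowSum {μ : YoungDiagram} (T : SemistandardYoungTableau μ) (i : ℕ) : ℕ :=
  ∑ c ∈ μ.cells.filter (fun c => T c.1 c.2 = i), (c.1 + 1)

namespace SpechtAux

/-- number of cells in column `c` with entry `≤ k` -/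
def colCount {μ : YoungDiagram} (T : SemistandardYoungTableau μ) (c k : ℕ) : ℕ :=
  (μ.cells.filter fun p => p.2 = c ∧ T p.1 p.2 ≤ k).card

lemma lower_set_mem_iff (s : Finset ℕ) (h : ∀ a b : ℕ, a < b → b ∈ s → a ∈ s) (x : ℕ) :
    x ∈ s ↔ x < s.card := by
  constructor
  · intro hx
    have hsub : Finset.range (x + 1) ⊆ s := by
      intro y hy
      simp only [Finset.mem_range, Nat.lt_succ_iff] at hy
      rcases eq_or_lt_of_le hy with rfl | hlt
      · exact hx
      · exact h y x hlt hx
    have := Finset.card_le_card hsub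
    simpa using this
  · intro hx
    by_contra hxs
    have hsub : s ⊆ Finset.range x := by
      intro y hy
      simp only [Finset.mem_range]
      by_contra hyx
      push_neg at hyx
      rcases eq_or_lt_of_le hyx with rfl | hlt
      · exact hxs hy
      · exact hxs (h x y hlt hy)
    have := Finset.card_le_card hsub
    simp only [Finset.card_range] at this
    omega

variable {μ : YoungDiagram} (T : SemistandardYoungTableau μ)

lemma mem_colCount (c k r : ℕ) :
    ((r, c) ∈ μ ∧ T r c ≤ k) ↔ r < colCount T c k := by
  classical
  have himg : (μ.cells.filter fun p => p.2 = c ∧ T p.1 p.2 ≤ k)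
      = ((Finset.range (μ.colLen c)).filter fun r => T r c ≤ k).image (fun r => (r, c)) := by
    ext ⟨a, b⟩
    simp only [Finset.mem_filter, Finset.mem_image, Finset.mem_range, YoungDiagram.mem_cells]
    constructor
    · rintro ⟨hab, rfl, hk⟩
      exact ⟨a, ⟨YoungDiagram.mem_iff_lt_colLen.mp hab, hk⟩, rfl⟩
    · rintro ⟨a', ⟨ha', hk⟩, heq⟩
      obtain ⟨rfl, rfl⟩ : a' = a ∧ b = c := by
        constructor <;> [exact congrArg Prod.fst heq; exact (congrArg Prod.snd heq).symm]
      exact ⟨YoungDiagram.mem_iff_lt_colLen.mpr ha', rfl, hk⟩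
  have hcard : colCount T c k = ((Finset.range (μ.colLen c)).filter fun r => T r c ≤ k).card := by
    rw [colCount, himg]
    exact Finset.card_image_of_injective _ (fun a b hab => congrArg Prod.fst hab)
  have hlow : ∀ a b : ℕ, a < b →
      b ∈ ((Finset.range (μ.colLen c)).filter fun r => T r c ≤ k) →
      a ∈ ((Finset.range (μ.colLen c)).filter fun r => T r c ≤ k) := by
    intro a b hab hb
    simp only [Finset.mem_filter, Finset.mem_range] at hb ⊢
    obtain ⟨hbl, hbk⟩ := hb
    have hbμ : (b, c) ∈ μ := YoungDiagram.mem_iff_lt_colLen.mpr hbl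
    exact ⟨lt_trans hab hbl, le_trans (le_of_lt (T.col_strict hab hbμ)) hbk⟩
  rw [hcard, ← lower_set_mem_iff _ hlow r]
  simp [Finset.mem_filter, Finset.mem_range, YoungDiagram.mem_iff_lt_colLen]

lemma colCount_mono (c k : ℕ) : colCount T c k ≤ colCount T c (k + 1) := by
  apply Finset.card_le_card
  intro p hp
  simp only [Finset.mem_filter] at hp ⊢
  exact ⟨hp.1, hp.2.1, le_trans hp.2.2 (by omega)⟩

lemma colCount_step (c k : ℕ) : colCount T c (k + 1) ≤ colCount T c k + 1 := by
  by_contra hcon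
  push_neg at hcon
  set x := colCount T c k with hx
  have h1 : x < colCount T c (k + 1) := by omega
  have h2 : x + 1 < colCount T c (k + 1) := by omega
  obtain ⟨hm1, hk1⟩ := (mem_colCount T c (k + 1) x).mpr h1
  obtain ⟨hm2, hk2⟩ := (mem_colCount T c (k + 1) (x + 1)).mpr h2
  have hlt : T x c < T (x + 1) c := T.col_strict (by omega) hm2
  have : x < x := (mem_colCount T c k x).mp ⟨hm1, by omega⟩
  omega

lemma colCount_col_mono (c k : ℕ) : colCount T (c + 1) k ≤ colCount T c k := by
  by_contra hcon
  push_neg at hcon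
  set x := colCount T c k with hx
  obtain ⟨hm, hk⟩ := (mem_colCount T (c + 1) k x).mpr hcon
  have hmμ : (x, c) ∈ μ := μ.up_left_mem le_rfl (by omega) hm
  have hle : T x c ≤ T x (c + 1) := T.row_weak (by omega) hm
  have : x < x := (mem_colCount T c k x).mp ⟨hmμ, le_trans hle hk⟩
  omega

variable {d : ℕ} {s : ℕ → ℕ}

lemma colCount_zero (hT : hasContent T d s) (c : ℕ) : colCount T c 0 = 0 := by
  have h0 := hT 0
  simp only [Finset.mem_Icc] at h0
  rw [if_neg (by omega)] at h0
  rw [colCount, Finset.card_eq_zero]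
  rw [Finset.card_eq_zero] at h0
  rw [Finset.eq_empty_iff_forall_notMem] at h0 ⊢
  intro p hp
  apply h0 p
  simp only [Finset.mem_filter] at hp ⊢
  exact ⟨hp.1, by omega⟩

lemma colCount_big (hcol : ∀ p ∈ μ.cells, p.2 < 3) (c k : ℕ) (hc : 3 ≤ c) :
    colCount T c k = 0 := by
  rw [colCount, Finset.card_eq_zero, Finset.eq_empty_iff_forall_notMem]
  intro p hp
  simp only [Finset.mem_filter] at hp
  have := hcol p hp.1
  omega

lemma filter_val_eq (c m : ℕ) :
    (μ.cells.filter fun p => p.2 = c ∧ T p.1 p.2 = m + 1)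
      = if colCount T c (m + 1) = colCount T c m then (∅ : Finset (ℕ × ℕ))
        else {(colCount T c m, c)} := by
  have hmono := colCount_mono T c m
  have hstep := colCount_step T c m
  set x := colCount T c m with hx
  set nn := colCount T c (m + 1) with hn
  split_ifs with hnx
  · rw [Finset.eq_empty_iff_forall_notMem]
    rintro ⟨a, b⟩ hp
    simp only [Finset.mem_filter, YoungDiagram.mem_cells] at hp
    obtain ⟨hab, rfl, hv⟩ := hp
    have h1 : a < nn := (mem_colCount T b (m + 1) a).mp ⟨hab, by omega⟩
    have h2 : ¬ a < x := by
      intro hax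
      have := (mem_colCount T b m a).mpr hax
      omega
    omega
  · have hnx1 : nn = x + 1 := by omega
    ext ⟨a, b⟩
    simp only [Finset.mem_filter, YoungDiagram.mem_cells, Finset.mem_singleton, Prod.mk.injEq]
    constructor
    · rintro ⟨hab, rfl, hv⟩
      have h1 : a < nn := (mem_colCount T b (m + 1) a).mp ⟨hab, by omega⟩
      have h2 : ¬ a < x := by
        intro hax
        have := (mem_colCount T b m a).mpr hax
        omega
      exact ⟨by omega, rfl⟩
    · rintro ⟨rfl, rfl⟩
      obtain ⟨hm1, hk1⟩ := (mem_colCount T b (m + 1) x).mpr (by omega)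
      have h2 : ¬ (T x b ≤ m) := by
        intro hle
        have := (mem_colCount T b m x).mp ⟨hm1, hle⟩
        omega
      exact ⟨hm1, rfl, by omega⟩

lemma card_val_eq (c m : ℕ) :
    (μ.cells.filter fun p => p.2 = c ∧ T p.1 p.2 = m + 1).card
      = if colCount T c (m + 1) = colCount T c m then 0 else 1 := by
  rw [filter_val_eq]
  split_ifs <;> simp

lemma sum_val_eq (c m : ℕ) :
    (∑ p ∈ μ.cells.filter fun p => p.2 = c ∧ T p.1 p.2 = m + 1, (p.1 + 1))
      = if colCount T c (m + 1) = colCount T c m then 0 else colCount T c m + 1 := by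
  rw [filter_val_eq]
  split_ifs <;> simp

lemma filter_decomp (hcol : ∀ p ∈ μ.cells, p.2 < 3) (k : ℕ) (f : ℕ × ℕ → ℕ) :
    (∑ p ∈ μ.cells.filter fun p => T p.1 p.2 = k, f p)
      = ∑ c ∈ Finset.range 3, ∑ p ∈ μ.cells.filter fun p => p.2 = c ∧ T p.1 p.2 = k, f p := by
  rw [← Finset.sum_fiberwise_of_maps_to (g := fun p => p.2) (t := Finset.range 3)
      (fun p hp => Finset.mem_range.mpr (hcol p (Finset.mem_filter.mp hp).1))]
  apply Finset.sum_congr rfl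
  intro c _
  apply Finset.sum_congr _ (fun _ _ => rfl)
  rw [Finset.filter_filter]
  apply Finset.filter_congr
  intro p _
  simp [and_comm]

lemma rowSum_decomp (hcol : ∀ p ∈ μ.cells, p.2 < 3) (m : ℕ) :
    rowSum T (m + 1)
      = (if colCount T 0 (m + 1) = colCount T 0 m then 0 else colCount T 0 m + 1)
      + (if colCount T 1 (m + 1) = colCount T 1 m then 0 else colCount T 1 m + 1)
      + (if colCount T 2 (m + 1) = colCount T 2 m then 0 else colCount T 2 m + 1) := by
  rw [rowSum, filter_decomp T hcol (m + 1) (fun p => p.1 + 1)]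
  rw [Finset.sum_range_succ, Finset.sum_range_succ, Finset.sum_range_succ,
    Finset.sum_range_zero, sum_val_eq, sum_val_eq, sum_val_eq]
  omega

lemma content_decomp (hcol : ∀ p ∈ μ.cells, p.2 < 3) (hT : hasContent T d s)
    (m : ℕ) (hm : m + 1 ∈ Finset.Icc 1 d) :
    (if colCount T 0 (m + 1) = colCount T 0 m then 0 else 1)
      + (if colCount T 1 (m + 1) = colCount T 1 m then 0 else 1)
      + (if colCount T 2 (m + 1) = colCount T 2 m then 0 else 1) = s (m + 1) := by
  have hc := hT (m + 1)
  rw [if_pos hm] at hc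
  rw [← hc, Finset.card_eq_sum_ones, filter_decomp T hcol (m + 1) (fun _ => 1)]
  rw [Finset.sum_range_succ, Finset.sum_range_succ, Finset.sum_range_succ,
    Finset.sum_range_zero]
  rw [← Finset.card_eq_sum_ones, ← Finset.card_eq_sum_ones, ← Finset.card_eq_sum_ones]
  rw [card_val_eq, card_val_eq, card_val_eq]
  omega

lemma val_mem (hT : hasContent T d s) {i j : ℕ} (hij : (i, j) ∈ μ) :
    T i j ∈ Finset.Icc 1 d := by
  by_contra hmem
  have hc := hT (T i j)
  rw [if_neg hmem, Finset.card_eq_zero, Finset.eq_empty_iff_forall_notMem] at hc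
  exact hc (i, j) (Finset.mem_filter.mpr ⟨(YoungDiagram.mem_cells _).mpr hij, rfl⟩)

end SpechtAux

open SpechtAux in
/-- for a partition `λ` of `n` with at most three columns and a composition
`ς = (s 1, …, s d)` of `n` with each `s i ∈ {1,2}`, the map sending a column-strict
(semistandard) Young tableau `T` of shape `λ` and content `ς` to the sequence
`(r^T(i) - s i)_{1 ≤ i ≤ d}` is injective. -/
theorem specht_row_sum_injective
    (n d : ℕ) (μ : YoungDiagram)
    (hcol : ∀ c ∈ μ.cells, c.2 < 3)
    (hn : μ.cells.card = n)
    (s : ℕ → ℕ) (hs : ∀ i ∈ Finset.Icc 1 d, s i = 1 ∨ s i = 2)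
    (hsum : ∑ i ∈ Finset.Icc 1 d, s i = n)
    (T T' : SemistandardYoungTableau μ)
    (hT : hasContent T d s) (hT' : hasContent T' d s)
    (h : ∀ i ∈ Finset.Icc 1 d, (rowSum T i : ℤ) - (s i : ℤ) = (rowSum T' i : ℤ) - (s i : ℤ)) :
    T = T' := by
  classical
  have key : ∀ k, k ≤ d → ∀ c, colCount T c k = colCount T' c k := by
    intro k
    induction k with
    | zero =>
      intro _ c
      rw [colCount_zero T hT, colCount_zero T' hT']
    | succ m ih =>
      intro hmd c
      have ihm : ∀ c, colCount T c m = colCount T' c m := ih (by omega)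
      have hmem : m + 1 ∈ Finset.Icc 1 d := Finset.mem_Icc.mpr ⟨by omega, by omega⟩
      have hrs : rowSum T (m + 1) = rowSum T' (m + 1) := by
        have := h (m + 1) hmem
        omega
      have hc0 := content_decomp T hcol hT m hmem
      have hc0' := content_decomp T' hcol hT' m hmem
      have hr0 := rowSum_decomp T hcol m
      have hr0' := rowSum_decomp T' hcol m
      rw [ihm 0, ihm 1, ihm 2] at hc0 hr0
      rw [hr0, hr0'] at hrs
      -- bounds
      have hb0 := colCount_mono T 0 m; have hb0' := colCount_step T 0 m
      have hb1 := colCount_mono T 1 m; have hb1' := colCount_step T 1 m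
      have hb2 := colCount_mono T 2 m; have hb2' := colCount_step T 2 m
      have hB0 := colCount_mono T' 0 m; have hB0' := colCount_step T' 0 m
      have hB1 := colCount_mono T' 1 m; have hB1' := colCount_step T' 1 m
      have hB2 := colCount_mono T' 2 m; have hB2' := colCount_step T' 2 m
      rw [ihm 0] at hb0 hb0'
      rw [ihm 1] at hb1 hb1'
      rw [ihm 2] at hb2 hb2'
      -- orderings of new counts
      have ho1 : colCount T 1 (m + 1) ≤ colCount T 0 (m + 1) := colCount_col_mono T 0 (m + 1)
      have ho2 : colCount T 2 (m + 1) ≤ colCount T 1 (m + 1) := colCount_col_mono T 1 (m + 1)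
      have hO1 : colCount T' 1 (m + 1) ≤ colCount T' 0 (m + 1) := colCount_col_mono T' 0 (m + 1)
      have hO2 : colCount T' 2 (m + 1) ≤ colCount T' 1 (m + 1) := colCount_col_mono T' 1 (m + 1)
      have hmain : colCount T 0 (m + 1) = colCount T' 0 (m + 1)
          ∧ colCount T 1 (m + 1) = colCount T' 1 (m + 1)
          ∧ colCount T 2 (m + 1) = colCount T' 2 (m + 1) := by
        have hsv := hs (m + 1) hmem
        split_ifs at hc0 hc0' hrs <;> omega
      rcases Nat.lt_or_ge c 3 with hc3 | hc3
      · interval_cases c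
        · exact hmain.1
        · exact hmain.2.1
        · exact hmain.2.2
      · rw [colCount_big T hcol c _ hc3, colCount_big T' hcol c _ hc3]
  ext i j
  by_cases hij : (i, j) ∈ μ
  · have h1 := val_mem T hT hij
    have h2 := val_mem T' hT' hij
    simp only [Finset.mem_Icc] at h1 h2
    have hle1 : T' i j ≤ T i j := by
      have := (mem_colCount T j (T i j) i).mp ⟨hij, le_rfl⟩
      rw [key (T i j) h1.2 j] at this
      exact ((mem_colCount T' j (T i j) i).mpr this).2
    have hle2 : T i j ≤ T' i j := by
      have := (mem_colCount T' j (T' i j) i).mp ⟨hij, le_rfl⟩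
      rw [← key (T' i j) h2.2 j] at this
      exact ((mem_colCount T j (T' i j) i).mpr this).2
    omega
  · rw [T.zeros hij, T'.zeros hij]
end

section
/- Let N be a numbering (bijective filling by 1,...,n) of a Young diagram λ with at most 3 columns, and define φ_N(i,j) = 1 if i and j lie in the same column of N and 0 otherwise (with φ_N(i,i)=0, φ_N symmetric). Then for any four distinct indices m,i,j,k in {1,...,n}, the symmetrized expression g(i,j,k) = -φ(m,i)φ(m,j)φ(m,k) + 1/6 - (1/6)(φ(m,i)+φ(m,j)+φ(m,k)+φ(i,j)+φ(i,k)+φ(j,k)) + (1/6)(φ(m,i)φ(j,k)+φ(m,j)φ(i,k)+φ(m,k)φ(i,j)) + (1/3)(φ(m,i)φ(m,j)+φ(m,i)φ(m,k)+φ(m,j)φ(m,k)) + (1/9)(φ(i,j)φ(i,k)+φ(j,i)φ(j,k)+φ(k,i)φ(k,j)) equals zero, where φ = φ_N. -/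
/-!
For four distinct entries, `g` depends only on the partition of `{m, i, j, k}` into columns,
because `φ` is then the Kronecker delta of the column indices. A direct check shows that `g`
vanishes on every partition with at most three blocks, and with at most three columns
the pigeonhole principle rules out the remaining partition into four singletons.
-/

section

variable {α : Type*}

def gExpr (φ : α → α → ℚ) (m i j k : α) : ℚ :=
  -(φ m i * φ m j * φ m k) + 1/6
    - (1/6) * (φ m i + φ m j + φ m k + φ i j + φ i k + φ j k)
    + (1/6) * (φ m i * φ j k + φ m j * φ i k + φ m k * φ i j)
    + (1/3) * (φ m i * φ m j + φ m i * φ m k + φ m j * φ m k)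
    + (1/9) * (φ i j * φ i k + φ j i * φ j k + φ k i * φ k j)

theorem gExpr_congr_of_ne {φ ψ : α → α → ℚ} (h : ∀ x y, x ≠ y → φ x y = ψ x y) {m i j k : α}
    (hmi : m ≠ i) (hmj : m ≠ j) (hmk : m ≠ k) (hij : i ≠ j) (hik : i ≠ k) (hjk : j ≠ k) :
    gExpr φ m i j k = gExpr ψ m i j k := by
  simp only [gExpr, h _ _ hmi, h _ _ hmj, h _ _ hmk, h _ _ hij, h _ _ hik, h _ _ hjk,
    h _ _ hij.symm, h _ _ hik.symm, h _ _ hjk.symm]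

theorem gExpr_kronecker_eq_zero [DecidableEq α] {a b c d : α}
    (h : a = b ∨ a = c ∨ a = d ∨ b = c ∨ b = d ∨ c = d) :
    gExpr (fun x y => if x = y then 1 else 0) a b c d = 0 := by
  rcases h with rfl | rfl | rfl | rfl | rfl | rfl <;> simp only [gExpr] <;>
    split_ifs <;> subst_vars <;> simp_all <;> norm_num

end

theorem specht_g_vanishes_general
    (n : ℕ) (μ : YoungDiagram)
    (hcol : ∀ c ∈ μ.cells, c.2 < 3)
    (ent : ℕ → ℕ × ℕ)
    (hent : Set.BijOn ent ↑(Finset.Icc 1 n) ↑μ.cells)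
    (φ : ℕ → ℕ → ℚ)
    (hφ : ∀ a b, φ a b = if a ≠ b ∧ (ent a).2 = (ent b).2 then 1 else 0)
    (m i j k : ℕ)
    (hm : m ∈ Finset.Icc 1 n) (hi : i ∈ Finset.Icc 1 n)
    (hj : j ∈ Finset.Icc 1 n) (hk : k ∈ Finset.Icc 1 n)
    (hmi : m ≠ i) (hmj : m ≠ j) (hmk : m ≠ k)
    (hij : i ≠ j) (hik : i ≠ k) (hjk : j ≠ k) :
    -(φ m i * φ m j * φ m k) + 1/6
      - (1/6) * (φ m i + φ m j + φ m k + φ i j + φ i k + φ j k)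
      + (1/6) * (φ m i * φ j k + φ m j * φ i k + φ m k * φ i j)
      + (1/3) * (φ m i * φ m j + φ m i * φ m k + φ m j * φ m k)
      + (1/9) * (φ i j * φ i k + φ j i * φ j k + φ k i * φ k j) = 0 := by
  have hφ_ne : ∀ a b, a ≠ b → φ a b = if (ent a).2 = (ent b).2 then 1 else 0 :=
    fun a b hab => by simp [hφ, hab]
  have hcol_lt : ∀ a ∈ Finset.Icc 1 n, (ent a).2 < 3 := fun a ha => hcol _ (hent.mapsTo ha)
  have hcollide : (ent m).2 = (ent i).2 ∨ (ent m).2 = (ent j).2 ∨ (ent m).2 = (ent k).2 ∨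
      (ent i).2 = (ent j).2 ∨ (ent i).2 = (ent k).2 ∨ (ent j).2 = (ent k).2 := by
    have := hcol_lt m hm
    have := hcol_lt i hi
    have := hcol_lt j hj
    have := hcol_lt k hk
    omega
  change gExpr φ m i j k = 0
  rw [gExpr_congr_of_ne hφ_ne hmi hmj hmk hij hik hjk]
  exact gExpr_kronecker_eq_zero hcollide

/-- let `N` be a numbering of a Young diagram with at most 3 columns, encoded by
the bijection `ent : {1,…,n} → cells of μ` giving the position of each entry, and let
`φ a b = 1` if `a ≠ b` lie in the same column and `0` otherwise.  Then for any four pairwise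
distinct entries `m i j k`, the symmetrized expression `g(i,j,k)` vanishes. -/
theorem specht_g_vanishes
    (n : ℕ) (μ : YoungDiagram)
    (hcol : ∀ c ∈ μ.cells, c.2 < 3)
    (hn : μ.cells.card = n)
    (ent : ℕ → ℕ × ℕ)
    (hent : Set.BijOn ent ↑(Finset.Icc 1 n) ↑μ.cells)
    (φ : ℕ → ℕ → ℚ)
    (hφ : ∀ a b, φ a b = if a ≠ b ∧ (ent a).2 = (ent b).2 then 1 else 0)
    (m i j k : ℕ)
    (hm : m ∈ Finset.Icc 1 n) (hi : i ∈ Finset.Icc 1 n)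
    (hj : j ∈ Finset.Icc 1 n) (hk : k ∈ Finset.Icc 1 n)
    (hmi : m ≠ i) (hmj : m ≠ j) (hmk : m ≠ k)
    (hij : i ≠ j) (hik : i ≠ k) (hjk : j ≠ k) :
    -(φ m i * φ m j * φ m k) + 1/6
      - (1/6) * (φ m i + φ m j + φ m k + φ i j + φ i k + φ j k)
      + (1/6) * (φ m i * φ j k + φ m j * φ i k + φ m k * φ i j)
      + (1/3) * (φ m i * φ m j + φ m i * φ m k + φ m j * φ m k)
      + (1/9) * (φ i j * φ i k + φ j i * φ j k + φ k i * φ k j) = 0 :=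
  specht_g_vanishes_general n μ hcol ent hent φ hφ m i j k hm hi hj hk hmi hmj hmk hij hik hjk
end

section
/- Let N be a numbering of a Young diagram λ with at most 2 columns and |λ| = n, with Specht polynomial P_N. Then for every m ∈ {1,...,n}: ∂²_{x_m} P_N + Σ_{i≠m} (∂_{x_i} + ∂_{x_m}) P_N /(x_i - x_m) + (1/2) Σ_{i≠m} Σ_{j≠i,m} P_N /((x_i-x_m)(x_j-x_m)) = 0, as an identity of rational functions. -/
open Finset

/-- Partial derivative in the `m`-th variable of a function of countably many real variables. -/
noncomputable def pd (m : ℕ) (f : (ℕ → ℝ) → ℝ) : (ℕ → ℝ) → ℝ :=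
  fun x => deriv (fun t => f (Function.update x m t)) (x m)

/-- The Specht polynomial of a filling `ent` of the Young diagram `μ`. -/
noncomputable def specht (μ : YoungDiagram) (ent : ℕ → ℕ → ℕ) (x : ℕ → ℝ) : ℝ :=
  ∏ p ∈ (μ.cells ×ˢ μ.cells).filter (fun p => p.1.2 = p.2.2 ∧ p.1.1 < p.2.1),
    (x (ent p.2.1 p.2.2) - x (ent p.1.1 p.1.2))

section derivs
variable {ι : Type*} [DecidableEq ι]

lemma hasDerivAt_factor (m e2 e1 : ℕ) (x : ℕ → ℝ) (t : ℝ) :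
    HasDerivAt (fun t => Function.update x m t e2 - Function.update x m t e1)
      ((if e2 = m then (1:ℝ) else 0) - (if e1 = m then 1 else 0)) t := by
  have h : ∀ e : ℕ, HasDerivAt (fun t => Function.update x m t e)
      (if e = m then (1:ℝ) else 0) t := by
    intro e
    rcases eq_or_ne e m with h | h
    · subst h
      simp only [Function.update_self, if_pos rfl]
      exact hasDerivAt_id t
    · simp only [Function.update_of_ne h, if_neg h]
      exact hasDerivAt_const t _
  exact (h e2).sub (h e1)

lemma hasDerivAt_updProd (m : ℕ) (x : ℕ → ℝ) (F : Finset ι) (a b : ι → ℕ) (t : ℝ) :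
    HasDerivAt
      (fun t => ∏ p ∈ F, (Function.update x m t (b p) - Function.update x m t (a p)))
      (∑ p ∈ F, ((if b p = m then (1:ℝ) else 0) - (if a p = m then 1 else 0)) *
        ∏ q ∈ F.erase p, (Function.update x m t (b q) - Function.update x m t (a q))) t := by
  have := HasDerivAt.fun_finset_prod
    (u := F) (f := fun p t => Function.update x m t (b p) - Function.update x m t (a p))
    (f' := fun p => (if b p = m then (1:ℝ) else 0) - (if a p = m then 1 else 0))
    (x := t) (fun p _ => hasDerivAt_factor m (b p) (a p) x t)
  simpa [smul_eq_mul, mul_comm] using this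

lemma pd_prod (m : ℕ) (F : Finset ι) (a b : ι → ℕ) (y : ℕ → ℝ) :
    pd m (fun z => ∏ p ∈ F, (z (b p) - z (a p))) y
      = ∑ p ∈ F, ((if b p = m then (1:ℝ) else 0) - (if a p = m then 1 else 0)) *
          ∏ q ∈ F.erase p, (y (b q) - y (a q)) := by
  have h := (hasDerivAt_updProd m y F a b (y m)).deriv
  simp only [Function.update_eq_self] at h
  exact h

lemma pd_sum_prod (m : ℕ) (F : Finset ι) (c : ι → ℝ) (G : ι → Finset ι) (a b : ι → ℕ)
    (y : ℕ → ℝ) :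
    pd m (fun z => ∑ p ∈ F, c p * ∏ q ∈ G p, (z (b q) - z (a q))) y
      = ∑ p ∈ F, c p * ∑ q ∈ G p,
          ((if b q = m then (1:ℝ) else 0) - (if a q = m then 1 else 0)) *
            ∏ r ∈ (G p).erase q, (y (b r) - y (a r)) := by
  have h : HasDerivAt
      (fun t => ∑ p ∈ F, c p *
        ∏ q ∈ G p, (Function.update y m t (b q) - Function.update y m t (a q)))
      (∑ p ∈ F, c p * ∑ q ∈ G p,
        ((if b q = m then (1:ℝ) else 0) - (if a q = m then 1 else 0)) *
          ∏ r ∈ (G p).erase q, (Function.update y m (y m) (b r) - Function.update y m (y m) (a r)))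
      (y m) :=
    HasDerivAt.fun_sum (fun p _ => (hasDerivAt_updProd m y (G p) a b (y m)).const_mul (c p))
  have h2 := h.deriv
  simp only [Function.update_eq_self] at h2 ⊢
  exact h2

end derivs

lemma pair_sum (S : Finset (ℕ×ℕ)) (g : ℕ×ℕ → ℕ×ℕ → ℝ) :
    ∑ c ∈ S, ∑ d ∈ S.filter (fun d => d.2 = c.2 ∧ d ≠ c), g c d
      = ∑ p ∈ (S ×ˢ S).filter (fun p => p.2.2 = p.1.2 ∧ p.2 ≠ p.1), g p.1 p.2 := by
  rw [Finset.sum_filter, Finset.sum_product]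
  exact Finset.sum_congr rfl fun c _ => Finset.sum_filter _ _

lemma pair_swap (S : Finset (ℕ×ℕ)) (h : ℕ×ℕ → ℕ×ℕ → ℝ) :
    ∑ p ∈ (S ×ˢ S).filter (fun p => p.2.2 = p.1.2 ∧ p.2 ≠ p.1), h p.1 p.2
      = ∑ p ∈ (S ×ˢ S).filter (fun p => p.2.2 = p.1.2 ∧ p.2 ≠ p.1), h p.2 p.1 := by
  apply Finset.sum_nbij' (fun p => Prod.swap p) (fun p => Prod.swap p)
  · intro p hp
    simp only [Finset.mem_filter, Finset.mem_product] at hp ⊢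
    exact ⟨⟨hp.1.2, hp.1.1⟩, hp.2.1.symm, hp.2.2.symm⟩
  · intro p hp
    simp only [Finset.mem_filter, Finset.mem_product] at hp ⊢
    exact ⟨⟨hp.1.2, hp.1.1⟩, hp.2.1.symm, hp.2.2.symm⟩
  · intro p _; rfl
  · intro p _; rfl
  · intro p _; rfl

lemma sum_pair_erase {ι : Type*} [DecidableEq ι] (F : Finset ι) (a : ι → ℝ) :
    ∑ p ∈ F, a p * ∑ q ∈ F.erase p, a q = (∑ p ∈ F, a p)^2 - ∑ p ∈ F, (a p)^2 := by
  rw [Finset.sum_congr rfl (fun p hp => by rw [Finset.sum_erase_eq_sub hp])]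
  simp only [mul_sub, Finset.sum_sub_distrib, ← Finset.sum_mul, sq]

lemma core_alg (S : Finset (ℕ×ℕ)) (cm : ℕ×ℕ) (v : ℕ×ℕ → ℝ)
    (hcm : cm ∉ S)
    (hvne : ∀ c ∈ insert cm S, ∀ d ∈ insert cm S, c ≠ d → v c ≠ v d)
    (hc2 : ∀ c ∈ insert cm S, c.2 < 2) :
    (∑ d ∈ S.filter (fun d => d.2 = cm.2), (v cm - v d)⁻¹) ^ 2
      - ∑ d ∈ S.filter (fun d => d.2 = cm.2), ((v cm - v d)⁻¹) ^ 2
      + ∑ c ∈ S,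
          ((∑ d ∈ (insert cm S).filter (fun d => d.2 = c.2 ∧ d ≠ c), (v c - v d)⁻¹)
            + ∑ d ∈ S.filter (fun d => d.2 = cm.2), (v cm - v d)⁻¹) * (v c - v cm)⁻¹
      + (1/2) * ∑ c ∈ S, ∑ d ∈ S.erase c, ((v c - v cm) * (v d - v cm))⁻¹ = 0 := by
  have hw0 : ∀ c ∈ S, v c - v cm ≠ 0 := fun c hc =>
    sub_ne_zero.2 (hvne c (mem_insert_of_mem hc) cm (mem_insert_self _ _)
      (fun h => hcm (h ▸ hc)))
  have hvd : ∀ c ∈ S, ∀ d ∈ S, c ≠ d → v c - v d ≠ 0 := fun c hc d hd hne =>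
    sub_ne_zero.2 (hvne c (mem_insert_of_mem hc) d (mem_insert_of_mem hd) hne)
  -- column split
  have hfil : S.filter (fun c => ¬ c.2 = 0) = S.filter (fun c => c.2 = 1) := by
    apply Finset.filter_congr
    intro c hc
    have := hc2 c (mem_insert_of_mem hc)
    constructor
    · intro h; omega
    · intro h; omega
  have split : ∀ f : ℕ×ℕ → ℝ, ∑ c ∈ S, f c
      = ∑ c ∈ S.filter (fun c => c.2 = 0), f c + ∑ c ∈ S.filter (fun c => c.2 = 1), f c := by
    intro f
    rw [← Finset.sum_filter_add_sum_filter_not S (fun c => c.2 = 0), hfil]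
  -- notation
  have hneg : ∀ c : ℕ×ℕ, (v cm - v c)⁻¹ = -(v c - v cm)⁻¹ := by
    intro c
    rw [show v cm - v c = -(v c - v cm) from (neg_sub _ _).symm, inv_neg]
  -- term 1
  have h1 : ∑ d ∈ S.filter (fun d => d.2 = cm.2), (v cm - v d)⁻¹
      = -∑ d ∈ S.filter (fun d => d.2 = cm.2), (v d - v cm)⁻¹ := by
    rw [← Finset.sum_neg_distrib]
    exact Finset.sum_congr rfl fun d _ => hneg d
  -- term 2
  have h2 : ∑ d ∈ S.filter (fun d => d.2 = cm.2), ((v cm - v d)⁻¹) ^ 2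
      = ∑ d ∈ S.filter (fun d => d.2 = cm.2), ((v d - v cm)⁻¹) ^ 2 := by
    refine Finset.sum_congr rfl fun d _ => ?_
    rw [hneg d]; ring

  -- inner filter over insert
  have hLc : ∀ c ∈ S, (∑ d ∈ (insert cm S).filter (fun d => d.2 = c.2 ∧ d ≠ c), (v c - v d)⁻¹)
      = (if c.2 = cm.2 then (v c - v cm)⁻¹ else 0)
        + ∑ d ∈ S.filter (fun d => d.2 = c.2 ∧ d ≠ c), (v c - v d)⁻¹ := by
    intro c hc
    rw [Finset.filter_insert]
    by_cases hcc : cm.2 = c.2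
    · rw [if_pos ⟨hcc, fun h => hcm (h ▸ hc)⟩,
        Finset.sum_insert (fun h => hcm (Finset.mem_filter.1 h).1), if_pos hcc.symm]
    · rw [if_neg (fun h => hcc h.1), if_neg (fun h => hcc h.symm), zero_add]
  -- pairing identity
  have hpair : ∀ p ∈ (S ×ˢ S).filter (fun p => p.2.2 = p.1.2 ∧ p.2 ≠ p.1),
      (v p.1 - v p.2)⁻¹ * (v p.1 - v cm)⁻¹ + (v p.2 - v p.1)⁻¹ * (v p.2 - v cm)⁻¹
        = -((v p.1 - v cm)⁻¹ * (v p.2 - v cm)⁻¹) := by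
    intro p hp
    simp only [Finset.mem_filter, Finset.mem_product] at hp
    have h12 : v p.1 - v p.2 ≠ 0 := hvd _ hp.1.1 _ hp.1.2 (Ne.symm hp.2.2)
    have h21 : v p.2 - v p.1 ≠ 0 := hvd _ hp.1.2 _ hp.1.1 hp.2.2
    have e1 := hw0 _ hp.1.1
    have e2 := hw0 _ hp.1.2
    field_simp
    ring
  have hV : 2 * (∑ c ∈ S, (∑ d ∈ S.filter (fun d => d.2 = c.2 ∧ d ≠ c), (v c - v d)⁻¹)
        * (v c - v cm)⁻¹)
      = -∑ c ∈ S, ∑ d ∈ S.filter (fun d => d.2 = c.2 ∧ d ≠ c),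
          (v c - v cm)⁻¹ * (v d - v cm)⁻¹ := by
    have e1 : ∑ c ∈ S, (∑ d ∈ S.filter (fun d => d.2 = c.2 ∧ d ≠ c), (v c - v d)⁻¹)
          * (v c - v cm)⁻¹
        = ∑ c ∈ S, ∑ d ∈ S.filter (fun d => d.2 = c.2 ∧ d ≠ c),
            (v c - v d)⁻¹ * (v c - v cm)⁻¹ :=
      Finset.sum_congr rfl fun c _ => Finset.sum_mul _ _ _
    rw [e1, pair_sum, pair_sum, two_mul]
    nth_rewrite 2 [pair_swap S (fun c d => (v c - v d)⁻¹ * (v c - v cm)⁻¹)]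
    rw [← Finset.sum_add_distrib, ← Finset.sum_neg_distrib]
    exact Finset.sum_congr rfl hpair
  -- W
  have hfe : ∀ c : ℕ×ℕ, S.filter (fun d => d.2 = c.2 ∧ d ≠ c)
      = (S.filter (fun d => d.2 = c.2)).erase c := by
    intro c; ext d
    simp only [Finset.mem_filter, Finset.mem_erase]
    tauto
  have hW : ∑ c ∈ S, ∑ d ∈ S.filter (fun d => d.2 = c.2 ∧ d ≠ c),
        (v c - v cm)⁻¹ * (v d - v cm)⁻¹
      = (∑ c ∈ S.filter (fun c => c.2 = 0), (v c - v cm)⁻¹)^2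
        + (∑ c ∈ S.filter (fun c => c.2 = 1), (v c - v cm)⁻¹)^2
        - ∑ c ∈ S, ((v c - v cm)⁻¹)^2 := by
    have e1 : ∀ c ∈ S, ∑ d ∈ S.filter (fun d => d.2 = c.2 ∧ d ≠ c),
          (v c - v cm)⁻¹ * (v d - v cm)⁻¹
        = (v c - v cm)⁻¹ * ((∑ d ∈ S.filter (fun d => d.2 = c.2), (v d - v cm)⁻¹)
            - (v c - v cm)⁻¹) := by
      intro c hc
      have hcmem : c ∈ S.filter (fun d => d.2 = c.2) := Finset.mem_filter.2 ⟨hc, rfl⟩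
      rw [hfe c, ← Finset.mul_sum, Finset.sum_erase_eq_sub hcmem]
    rw [Finset.sum_congr rfl e1, split]
    have e2 : ∀ (t : ℕ), ∑ c ∈ S.filter (fun c => c.2 = t),
          (v c - v cm)⁻¹ * ((∑ d ∈ S.filter (fun d => d.2 = c.2), (v d - v cm)⁻¹)
            - (v c - v cm)⁻¹)
        = (∑ c ∈ S.filter (fun c => c.2 = t), (v c - v cm)⁻¹)^2
          - ∑ c ∈ S.filter (fun c => c.2 = t), ((v c - v cm)⁻¹)^2 := by
      intro t
      calc ∑ c ∈ S.filter (fun c => c.2 = t),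
            (v c - v cm)⁻¹ * ((∑ d ∈ S.filter (fun d => d.2 = c.2), (v d - v cm)⁻¹)
              - (v c - v cm)⁻¹)
          = ∑ c ∈ S.filter (fun c => c.2 = t),
              ((v c - v cm)⁻¹ * (∑ d ∈ S.filter (fun d => d.2 = t), (v d - v cm)⁻¹)
                - (v c - v cm)⁻¹ ^ 2) := by
            refine Finset.sum_congr rfl fun c hc => ?_
            have hct : c.2 = t := (Finset.mem_filter.1 hc).2
            have hfs : S.filter (fun d => d.2 = c.2) = S.filter (fun d => d.2 = t) :=
              Finset.filter_congr (fun d _ => by rw [hct])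
            rw [hfs]
            ring
        _ = (∑ c ∈ S.filter (fun c => c.2 = t), (v c - v cm)⁻¹)
              * (∑ d ∈ S.filter (fun d => d.2 = t), (v d - v cm)⁻¹)
            - ∑ c ∈ S.filter (fun c => c.2 = t), (v c - v cm)⁻¹ ^ 2 := by
            rw [Finset.sum_sub_distrib, ← Finset.sum_mul]
        _ = (∑ c ∈ S.filter (fun c => c.2 = t), (v c - v cm)⁻¹) ^ 2
            - ∑ c ∈ S.filter (fun c => c.2 = t), (v c - v cm)⁻¹ ^ 2 := by
            rw [← sq]
    rw [e2 0, e2 1, split (fun c => ((v c - v cm)⁻¹)^2)]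
    ring
  -- fourth term
  have h4 : ∑ c ∈ S, ∑ d ∈ S.erase c, ((v c - v cm) * (v d - v cm))⁻¹
      = (∑ c ∈ S, (v c - v cm)⁻¹)^2 - ∑ c ∈ S, ((v c - v cm)⁻¹)^2 := by
    have e : ∀ c ∈ S, ∑ d ∈ S.erase c, ((v c - v cm) * (v d - v cm))⁻¹
        = (v c - v cm)⁻¹ * ∑ d ∈ S.erase c, (v d - v cm)⁻¹ := by
      intro c _
      rw [Finset.mul_sum]
      exact Finset.sum_congr rfl fun d _ => mul_inv _ _
    rw [Finset.sum_congr rfl e]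
    exact sum_pair_erase S _
  -- third term
  have h3 : ∑ c ∈ S, ((∑ d ∈ (insert cm S).filter (fun d => d.2 = c.2 ∧ d ≠ c), (v c - v d)⁻¹)
        + ∑ d ∈ S.filter (fun d => d.2 = cm.2), (v cm - v d)⁻¹) * (v c - v cm)⁻¹
      = (∑ d ∈ S.filter (fun d => d.2 = cm.2), ((v d - v cm)⁻¹)^2)
        + (∑ c ∈ S, (∑ d ∈ S.filter (fun d => d.2 = c.2 ∧ d ≠ c), (v c - v d)⁻¹)
            * (v c - v cm)⁻¹)
        - (∑ d ∈ S.filter (fun d => d.2 = cm.2), (v d - v cm)⁻¹)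
            * (∑ c ∈ S, (v c - v cm)⁻¹) := by
    have e : ∀ c ∈ S, ((∑ d ∈ (insert cm S).filter (fun d => d.2 = c.2 ∧ d ≠ c), (v c - v d)⁻¹)
          + ∑ d ∈ S.filter (fun d => d.2 = cm.2), (v cm - v d)⁻¹) * (v c - v cm)⁻¹
        = ((if c.2 = cm.2 then ((v c - v cm)⁻¹)^2 else 0)
            + (∑ d ∈ S.filter (fun d => d.2 = c.2 ∧ d ≠ c), (v c - v d)⁻¹) * (v c - v cm)⁻¹)
          + (-(∑ d ∈ S.filter (fun d => d.2 = cm.2), (v d - v cm)⁻¹)) * (v c - v cm)⁻¹ := by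
      intro c hc
      rw [hLc c hc, h1]
      by_cases hcc : c.2 = cm.2
      · rw [if_pos hcc, if_pos hcc]; ring
      · rw [if_neg hcc, if_neg hcc]; ring
    rw [Finset.sum_congr rfl e, Finset.sum_add_distrib, Finset.sum_add_distrib,
      ← Finset.sum_filter, ← Finset.mul_sum]
    ring
  -- assemble
  have hVval : (∑ c ∈ S, (∑ d ∈ S.filter (fun d => d.2 = c.2 ∧ d ≠ c), (v c - v d)⁻¹)
        * (v c - v cm)⁻¹)
      = -((∑ c ∈ S.filter (fun c => c.2 = 0), (v c - v cm)⁻¹)^2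
          + (∑ c ∈ S.filter (fun c => c.2 = 1), (v c - v cm)⁻¹)^2
          - ∑ c ∈ S, ((v c - v cm)⁻¹)^2) / 2 := by
    rw [hW] at hV
    linarith
  rw [h3, h4, h1, h2, hVval, split (fun c => (v c - v cm)⁻¹)]
  have hcm2 := hc2 cm (mem_insert_self _ _)
  have hcm01 : cm.2 = 0 ∨ cm.2 = 1 := by omega
  rcases hcm01 with h | h
  · have hfs : S.filter (fun d => d.2 = cm.2) = S.filter (fun d => d.2 = 0) :=
      Finset.filter_congr (fun d _ => by rw [h])
    rw [hfs]
    ring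
  · have hfs : S.filter (fun d => d.2 = cm.2) = S.filter (fun d => d.2 = 1) :=
      Finset.filter_congr (fun d _ => by rw [h])
    rw [hfs]
    ring



/-- the Specht polynomial of a numbering of a Young diagram with at most 2 columns
satisfies the second-order PDE system. -/
theorem specht_second_order_pde
    (n : ℕ) (μ : YoungDiagram)
    (hcol : ∀ c ∈ μ.cells, c.2 < 2)
    (hn : μ.cells.card = n)
    (ent : ℕ → ℕ → ℕ)
    (hent : Set.BijOn (fun c : ℕ × ℕ => ent c.1 c.2) ↑μ.cells ↑(Finset.Icc 1 n))
    (m : ℕ) (hm : m ∈ Finset.Icc 1 n)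
    (x : ℕ → ℝ)
    (hx : ∀ i ∈ Finset.Icc 1 n, ∀ j ∈ Finset.Icc 1 n, i < j → x i < x j) :
    pd m (pd m (specht μ ent)) x
    + ∑ i ∈ (Finset.Icc 1 n).filter (· ≠ m),
        (pd i (specht μ ent) x + pd m (specht μ ent) x) / (x i - x m)
    + (1/2) * ∑ i ∈ (Finset.Icc 1 n).filter (· ≠ m),
        ∑ j ∈ (Finset.Icc 1 n).filter (fun j => j ≠ i ∧ j ≠ m),
          specht μ ent x / ((x i - x m) * (x j - x m)) = 0 := by
  classical
  set en : ℕ × ℕ → ℕ := fun c => ent c.1 c.2 with hen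
  set F : Finset ((ℕ×ℕ)×(ℕ×ℕ)) :=
    (μ.cells ×ˢ μ.cells).filter (fun p => p.1.2 = p.2.2 ∧ p.1.1 < p.2.1) with hF
  have hsp : specht μ ent = fun z => ∏ p ∈ F, (z (en p.2) - z (en p.1)) := rfl
  -- basic facts
  have hmapsTo : ∀ c ∈ μ.cells, en c ∈ Finset.Icc 1 n := by
    intro c hc
    have := hent.mapsTo (by exact_mod_cast hc)
    exact_mod_cast this
  have hinj : ∀ c ∈ μ.cells, ∀ d ∈ μ.cells, en c = en d → c = d := by
    intro c hc d hd h
    exact hent.injOn (by exact_mod_cast hc) (by exact_mod_cast hd) h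
  obtain ⟨cm, hcmA, hcm⟩ : ∃ cm ∈ μ.cells, en cm = m := by
    obtain ⟨c, hc, hcc⟩ := hent.surjOn (by exact_mod_cast hm : m ∈ (↑(Finset.Icc 1 n) : Set ℕ))
    exact ⟨c, by exact_mod_cast hc, hcc⟩
  have hxne : ∀ i ∈ Finset.Icc 1 n, ∀ j ∈ Finset.Icc 1 n, i ≠ j → x i ≠ x j := by
    intro i hi j hj hij
    rcases lt_or_gt_of_ne hij with h | h
    · exact ne_of_lt (hx i hi j hj h)
    · exact ne_of_gt (hx j hj i hi h)
  have hvne : ∀ c ∈ μ.cells, ∀ d ∈ μ.cells, c ≠ d → x (en c) ≠ x (en d) := by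
    intro c hc d hd hcd
    exact hxne _ (hmapsTo c hc) _ (hmapsTo d hd) (fun h => hcd (hinj c hc d hd h))
  have hFmem : ∀ p ∈ F, p.1 ∈ μ.cells ∧ p.2 ∈ μ.cells ∧ p.1.2 = p.2.2 ∧ p.1.1 < p.2.1 := by
    intro p hp
    rw [hF, Finset.mem_filter, Finset.mem_product] at hp
    exact ⟨hp.1.1, hp.1.2, hp.2.1, hp.2.2⟩
  have hne12 : ∀ p ∈ F, p.1 ≠ p.2 := by
    intro p hp h
    have := (hFmem p hp).2.2.2
    rw [h] at this
    exact lt_irrefl _ this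
  have hf0 : ∀ p ∈ F, x (en p.2) - x (en p.1) ≠ 0 := by
    intro p hp
    obtain ⟨h1, h2, _, _⟩ := hFmem p hp
    exact sub_ne_zero.2 (hvne _ h2 _ h1 (Ne.symm (hne12 p hp)))
  set P : ℝ := ∏ p ∈ F, (x (en p.2) - x (en p.1)) with hP
  have hP0 : P ≠ 0 := Finset.prod_ne_zero_iff.2 hf0
  have hPsp : specht μ ent x = P := rfl
  -- first derivative
  have hD1 : ∀ (i : ℕ) (y : ℕ → ℝ), pd i (specht μ ent) y
      = ∑ p ∈ F, ((if en p.2 = i then (1:ℝ) else 0) - (if en p.1 = i then 1 else 0)) *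
          ∏ q ∈ F.erase p, (y (en q.2) - y (en q.1)) := by
    intro i y
    rw [hsp]
    exact pd_prod i F (fun p => en p.1) (fun p => en p.2) y
  have herase : ∀ p ∈ F, ∏ q ∈ F.erase p, (x (en q.2) - x (en q.1))
      = P / (x (en p.2) - x (en p.1)) := by
    intro p hp
    rw [eq_div_iff (hf0 p hp)]
    exact Finset.prod_erase_mul F _ hp
  have hD1x : ∀ i : ℕ, pd i (specht μ ent) x
      = P * ∑ p ∈ F, ((if en p.2 = i then (1:ℝ) else 0) - (if en p.1 = i then 1 else 0))
          / (x (en p.2) - x (en p.1)) := by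
    intro i
    rw [hD1 i x, Finset.mul_sum]
    refine Finset.sum_congr rfl fun p hp => ?_
    rw [herase p hp]
    ring
  -- second derivative
  have hD2 : pd m (pd m (specht μ ent)) x
      = ∑ p ∈ F, ((if en p.2 = m then (1:ℝ) else 0) - (if en p.1 = m then 1 else 0)) *
          ∑ q ∈ F.erase p,
            ((if en q.2 = m then (1:ℝ) else 0) - (if en q.1 = m then 1 else 0)) *
              ∏ r ∈ (F.erase p).erase q, (x (en r.2) - x (en r.1)) := by
    have h1 : pd m (specht μ ent) = fun y => ∑ p ∈ F,
        ((if en p.2 = m then (1:ℝ) else 0) - (if en p.1 = m then 1 else 0)) *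
          ∏ q ∈ F.erase p, (y (en q.2) - y (en q.1)) := funext fun y => hD1 m y
    rw [h1]
    exact pd_sum_prod m F _ (fun p => F.erase p) (fun p => en p.1) (fun p => en p.2) x
  have herase2 : ∀ p ∈ F, ∀ q ∈ F.erase p,
      ∏ r ∈ (F.erase p).erase q, (x (en r.2) - x (en r.1))
        = P / ((x (en p.2) - x (en p.1)) * (x (en q.2) - x (en q.1))) := by
    intro p hp q hq
    have hq' : q ∈ F := Finset.mem_of_mem_erase hq
    have e1 := Finset.prod_erase_mul (F.erase p) (fun r => x (en r.2) - x (en r.1)) hq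
    have e2 := Finset.prod_erase_mul F (fun r => x (en r.2) - x (en r.1)) hp
    rw [eq_div_iff (mul_ne_zero (hf0 p hp) (hf0 q hq'))]
    linear_combination (x (en p.2) - x (en p.1)) * e1 + e2
  have hD2x : pd m (pd m (specht μ ent)) x
      = P * ((∑ p ∈ F, ((if en p.2 = m then (1:ℝ) else 0) - (if en p.1 = m then 1 else 0))
              / (x (en p.2) - x (en p.1)))^2
          - ∑ p ∈ F, (((if en p.2 = m then (1:ℝ) else 0) - (if en p.1 = m then 1 else 0))
              / (x (en p.2) - x (en p.1)))^2) := by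
    rw [hD2]
    have e : ∀ p ∈ F, ((if en p.2 = m then (1:ℝ) else 0) - (if en p.1 = m then 1 else 0)) *
        ∑ q ∈ F.erase p,
          ((if en q.2 = m then (1:ℝ) else 0) - (if en q.1 = m then 1 else 0)) *
            ∏ r ∈ (F.erase p).erase q, (x (en r.2) - x (en r.1))
      = P * ((((if en p.2 = m then (1:ℝ) else 0) - (if en p.1 = m then 1 else 0))
            / (x (en p.2) - x (en p.1)))
          * ∑ q ∈ F.erase p,
            (((if en q.2 = m then (1:ℝ) else 0) - (if en q.1 = m then 1 else 0))
              / (x (en q.2) - x (en q.1)))) := by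
      intro p hp
      rw [Finset.mul_sum, Finset.mul_sum, Finset.mul_sum]
      refine Finset.sum_congr rfl fun q hq => ?_
      rw [herase2 p hp q hq]
      have hfp := hf0 p hp
      have hfq := hf0 q (Finset.mem_of_mem_erase hq)
      field_simp
    rw [Finset.sum_congr rfl e, ← Finset.mul_sum]
    congr 1
    exact sum_pair_erase F _

  -- inverse of the numbering
  set cl : ℕ → ℕ × ℕ := Function.invFunOn en ↑μ.cells with hclo
  have hclp : ∀ i ∈ Finset.Icc 1 n, cl i ∈ μ.cells ∧ en (cl i) = i := by
    intro i hi
    have : i ∈ en '' ↑μ.cells := hent.surjOn (by exact_mod_cast hi)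
    obtain ⟨a, ha, hai⟩ := this
    constructor
    · exact_mod_cast Function.invFunOn_mem ⟨a, ha, hai⟩
    · exact Function.invFunOn_eq ⟨a, ha, hai⟩
  have hgen : ∀ (s : Finset ℕ) (t : Finset (ℕ×ℕ)), t ⊆ μ.cells →
      (∀ i ∈ s, i ∈ Finset.Icc 1 n) → (∀ i ∈ s, cl i ∈ t) → (∀ c ∈ t, en c ∈ s) →
      ∀ h : ℕ → ℝ, ∑ i ∈ s, h i = ∑ c ∈ t, h (en c) := by
    intro s t hts hsI hscl hten h
    refine Finset.sum_nbij' cl en (fun i hi => hscl i hi) (fun c hc => hten c hc) ?_ ?_ ?_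
    · intro i hi
      exact (hclp i (hsI i hi)).2
    · intro c hc
      have h1 : cl (en c) ∈ μ.cells := (hclp (en c) (hmapsTo c (hts hc))).1
      have h2 : en (cl (en c)) = en c := (hclp (en c) (hmapsTo c (hts hc))).2
      exact hinj _ h1 _ (hts hc) h2
    · intro i hi
      rw [(hclp i (hsI i hi)).2]
  have hEcell : ∀ h : ℕ → ℝ, ∑ i ∈ (Finset.Icc 1 n).filter (· ≠ m), h i
      = ∑ c ∈ μ.cells.erase cm, h (en c) := by
    intro h
    refine hgen _ _ (Finset.erase_subset _ _) ?_ ?_ ?_ h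
    · intro i hi; exact (Finset.mem_filter.1 hi).1
    · intro i hi
      obtain ⟨hiI, him⟩ := Finset.mem_filter.1 hi
      refine Finset.mem_erase.2 ⟨?_, (hclp i hiI).1⟩
      intro hq
      exact him (by rw [← (hclp i hiI).2, hq, hcm])
    · intro c hc
      obtain ⟨hccm, hcA⟩ := Finset.mem_erase.1 hc
      refine Finset.mem_filter.2 ⟨hmapsTo c hcA, ?_⟩
      intro hq
      exact hccm (hinj c hcA cm hcmA (by rw [hq, hcm]))
  have hEcell2 : ∀ c ∈ μ.cells.erase cm, ∀ h : ℕ → ℝ,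
      ∑ j ∈ (Finset.Icc 1 n).filter (fun j => j ≠ en c ∧ j ≠ m), h j
        = ∑ d ∈ (μ.cells.erase cm).erase c, h (en d) := by
    intro c hc h
    obtain ⟨hccm, hcA⟩ := Finset.mem_erase.1 hc
    refine hgen _ _ ((Finset.erase_subset _ _).trans (Finset.erase_subset _ _)) ?_ ?_ ?_ h
    · intro j hj; exact (Finset.mem_filter.1 hj).1
    · intro j hj
      obtain ⟨hjI, hjc, hjm⟩ := Finset.mem_filter.1 hj
      refine Finset.mem_erase.2 ⟨?_, Finset.mem_erase.2 ⟨?_, (hclp j hjI).1⟩⟩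
      · intro hq
        exact hjc (by rw [← (hclp j hjI).2, hq])
      · intro hq
        exact hjm (by rw [← (hclp j hjI).2, hq, hcm])
    · intro d hd
      obtain ⟨hdc, hd2⟩ := Finset.mem_erase.1 hd
      obtain ⟨hdcm, hdA⟩ := Finset.mem_erase.1 hd2
      refine Finset.mem_filter.2 ⟨hmapsTo d hdA, ?_, ?_⟩
      · intro hq
        exact hdc (hinj d hdA c hcA hq)
      · intro hq
        exact hdcm (hinj d hdA cm hcmA (by rw [hq, hcm]))
  -- reindex pair sums to cells
  have hRE2 : ∀ c ∈ μ.cells, ∀ h : ℕ×ℕ → ℝ,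
      ∑ p ∈ F.filter (fun p => p.2 = c), h p.1
        = ∑ d ∈ μ.cells.filter (fun d => d.2 = c.2 ∧ d.1 < c.1), h d := by
    intro c hc h
    refine Finset.sum_nbij' (fun p => p.1) (fun d => (d, c)) ?_ ?_ ?_ ?_ ?_
    · intro p hp
      obtain ⟨hpF, hp2⟩ := Finset.mem_filter.1 hp
      obtain ⟨h1, _, h3, h4⟩ := hFmem p hpF
      exact Finset.mem_filter.2 ⟨h1, by rw [← hp2]; exact ⟨h3, h4⟩⟩
    · intro d hd
      obtain ⟨hdA, hd2, hd1⟩ := Finset.mem_filter.1 hd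
      refine Finset.mem_filter.2 ⟨?_, rfl⟩
      rw [hF, Finset.mem_filter, Finset.mem_product]
      exact ⟨⟨hdA, hc⟩, hd2, hd1⟩
    · intro p hp
      obtain ⟨-, hp2⟩ := Finset.mem_filter.1 hp
      rw [← hp2]
    · intro d _; rfl
    · intro p _; rfl
  have hRE1 : ∀ c ∈ μ.cells, ∀ h : ℕ×ℕ → ℝ,
      ∑ p ∈ F.filter (fun p => p.1 = c), h p.2
        = ∑ d ∈ μ.cells.filter (fun d => d.2 = c.2 ∧ c.1 < d.1), h d := by
    intro c hc h
    refine Finset.sum_nbij' (fun p => p.2) (fun d => (c, d)) ?_ ?_ ?_ ?_ ?_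
    · intro p hp
      obtain ⟨hpF, hp1⟩ := Finset.mem_filter.1 hp
      obtain ⟨_, h2, h3, h4⟩ := hFmem p hpF
      exact Finset.mem_filter.2 ⟨h2, by rw [← hp1]; exact ⟨h3.symm, h4⟩⟩
    · intro d hd
      obtain ⟨hdA, hd2, hd1⟩ := Finset.mem_filter.1 hd
      refine Finset.mem_filter.2 ⟨?_, rfl⟩
      rw [hF, Finset.mem_filter, Finset.mem_product]
      exact ⟨⟨hc, hdA⟩, hd2.symm, hd1⟩
    · intro p hp
      obtain ⟨-, hp1⟩ := Finset.mem_filter.1 hp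
      rw [← hp1]
    · intro d _; rfl
    · intro p _; rfl
  -- union of the two half-column filters
  have hunion : ∀ c ∈ μ.cells, ∀ h : ℕ×ℕ → ℝ,
      (∑ d ∈ μ.cells.filter (fun d => d.2 = c.2 ∧ d.1 < c.1), h d)
        + ∑ d ∈ μ.cells.filter (fun d => d.2 = c.2 ∧ c.1 < d.1), h d
      = ∑ d ∈ μ.cells.filter (fun d => d.2 = c.2 ∧ d ≠ c), h d := by
    intro c _ h
    have hdisj : Disjoint (μ.cells.filter (fun d => d.2 = c.2 ∧ d.1 < c.1))
        (μ.cells.filter (fun d => d.2 = c.2 ∧ c.1 < d.1)) := by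
      rw [Finset.disjoint_left]
      intro d h1 h2
      have u1 := (Finset.mem_filter.1 h1).2.2
      have u2 := (Finset.mem_filter.1 h2).2.2
      omega
    rw [← Finset.sum_union hdisj]
    apply Finset.sum_congr _ (fun _ _ => rfl)
    ext d
    simp only [Finset.mem_union, Finset.mem_filter]
    constructor
    · rintro (⟨hdA, hcol2, hlt⟩ | ⟨hdA, hcol2, hlt⟩)
      · exact ⟨hdA, hcol2, fun hq => by rw [hq] at hlt; omega⟩
      · exact ⟨hdA, hcol2, fun hq => by rw [hq] at hlt; omega⟩
    · rintro ⟨hdA, hcol2, hne⟩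
      have hd1 : d.1 ≠ c.1 := fun hq => hne (Prod.ext hq hcol2)
      rcases lt_or_gt_of_ne hd1 with hl | hl
      · exact Or.inl ⟨hdA, hcol2, hl⟩
      · exact Or.inr ⟨hdA, hcol2, hl⟩
  -- the L-sum in cell language
  have hLcell : ∀ c ∈ μ.cells, ∀ i : ℕ, en c = i →
      (∑ p ∈ F, ((if en p.2 = i then (1:ℝ) else 0) - (if en p.1 = i then 1 else 0))
          / (x (en p.2) - x (en p.1)))
        = ∑ d ∈ μ.cells.filter (fun d => d.2 = c.2 ∧ d ≠ c), (x (en c) - x (en d))⁻¹ := by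
    intro c hcA i hi
    have e0 : ∀ p ∈ F, ((if en p.2 = i then (1:ℝ) else 0) - (if en p.1 = i then 1 else 0))
        / (x (en p.2) - x (en p.1))
      = (if p.2 = c then (x (en p.2) - x (en p.1))⁻¹ else 0)
        - (if p.1 = c then (x (en p.2) - x (en p.1))⁻¹ else 0) := by
      intro p hp
      obtain ⟨h1, h2, _, _⟩ := hFmem p hp
      have q2 : (en p.2 = i) = (p.2 = c) := by
        apply propext; constructor
        · intro h; exact hinj _ h2 _ hcA (by rw [h, hi])
        · intro h; rw [h, hi]
      have q1 : (en p.1 = i) = (p.1 = c) := by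
        apply propext; constructor
        · intro h; exact hinj _ h1 _ hcA (by rw [h, hi])
        · intro h; rw [h, hi]
      simp only [q2, q1]
      split_ifs <;> ring
    rw [Finset.sum_congr rfl e0, Finset.sum_sub_distrib, ← Finset.sum_filter, ← Finset.sum_filter]
    have e2 : ∑ p ∈ F.filter (fun p => p.2 = c), (x (en p.2) - x (en p.1))⁻¹
        = ∑ p ∈ F.filter (fun p => p.2 = c), (x (en c) - x (en p.1))⁻¹ :=
      Finset.sum_congr rfl fun p hp => by rw [(Finset.mem_filter.1 hp).2]
    have e3 : ∑ p ∈ F.filter (fun p => p.1 = c), (x (en p.2) - x (en p.1))⁻¹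
        = ∑ p ∈ F.filter (fun p => p.1 = c), (x (en p.2) - x (en c))⁻¹ :=
      Finset.sum_congr rfl fun p hp => by rw [(Finset.mem_filter.1 hp).2]
    rw [e2, e3, hRE2 c hcA (fun d => (x (en c) - x (en d))⁻¹),
      hRE1 c hcA (fun d => (x (en d) - x (en c))⁻¹)]
    have e4 : ∑ d ∈ μ.cells.filter (fun d => d.2 = c.2 ∧ c.1 < d.1), (x (en d) - x (en c))⁻¹
        = -∑ d ∈ μ.cells.filter (fun d => d.2 = c.2 ∧ c.1 < d.1), (x (en c) - x (en d))⁻¹ := by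
      rw [← Finset.sum_neg_distrib]
      refine Finset.sum_congr rfl fun d _ => ?_
      rw [show x (en d) - x (en c) = -(x (en c) - x (en d)) from by ring, inv_neg]
    rw [e4, sub_neg_eq_add]
    exact hunion c hcA _
  -- the Q-sum in cell language
  have hQcell :
      (∑ p ∈ F, (((if en p.2 = m then (1:ℝ) else 0) - (if en p.1 = m then 1 else 0))
          / (x (en p.2) - x (en p.1)))^2)
        = ∑ d ∈ μ.cells.filter (fun d => d.2 = cm.2 ∧ d ≠ cm),
            ((x (en cm) - x (en d))⁻¹)^2 := by
    have e0 : ∀ p ∈ F, (((if en p.2 = m then (1:ℝ) else 0) - (if en p.1 = m then 1 else 0))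
        / (x (en p.2) - x (en p.1)))^2
      = (if p.2 = cm then ((x (en p.2) - x (en p.1))⁻¹)^2 else 0)
        + (if p.1 = cm then ((x (en p.2) - x (en p.1))⁻¹)^2 else 0) := by
      intro p hp
      obtain ⟨h1, h2, _, _⟩ := hFmem p hp
      have q2 : (en p.2 = m) = (p.2 = cm) := by
        apply propext; constructor
        · intro h; exact hinj _ h2 _ hcmA (by rw [h, hcm])
        · intro h; rw [h, hcm]
      have q1 : (en p.1 = m) = (p.1 = cm) := by
        apply propext; constructor
        · intro h; exact hinj _ h1 _ hcmA (by rw [h, hcm])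
        · intro h; rw [h, hcm]
      simp only [q2, q1]
      split_ifs with u1 u2 u2
      · exact absurd (by rw [u2, u1] : p.1 = p.2) (hne12 p hp)
      · ring
      · ring
      · ring
    rw [Finset.sum_congr rfl e0, Finset.sum_add_distrib, ← Finset.sum_filter, ← Finset.sum_filter]
    have e2 : ∑ p ∈ F.filter (fun p => p.2 = cm), ((x (en p.2) - x (en p.1))⁻¹)^2
        = ∑ p ∈ F.filter (fun p => p.2 = cm), ((x (en cm) - x (en p.1))⁻¹)^2 :=
      Finset.sum_congr rfl fun p hp => by rw [(Finset.mem_filter.1 hp).2]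
    have e3 : ∑ p ∈ F.filter (fun p => p.1 = cm), ((x (en p.2) - x (en p.1))⁻¹)^2
        = ∑ p ∈ F.filter (fun p => p.1 = cm), ((x (en cm) - x (en p.2))⁻¹)^2 := by
      refine Finset.sum_congr rfl fun p hp => ?_
      rw [(Finset.mem_filter.1 hp).2]
      rw [show x (en p.2) - x (en cm) = -(x (en cm) - x (en p.2)) from by ring, inv_neg]
      ring
    rw [e2, e3, hRE2 cm hcmA (fun d => ((x (en cm) - x (en d))⁻¹)^2),
      hRE1 cm hcmA (fun d => ((x (en cm) - x (en d))⁻¹)^2)]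
    exact hunion cm hcmA _
  -- final assembly
  have hSfil : μ.cells.filter (fun d => d.2 = cm.2 ∧ d ≠ cm)
      = (μ.cells.erase cm).filter (fun d => d.2 = cm.2) := by
    ext d
    simp only [Finset.mem_filter, Finset.mem_erase]
    tauto
  have hmid : ∑ i ∈ (Finset.Icc 1 n).filter (· ≠ m),
      (pd i (specht μ ent) x + pd m (specht μ ent) x) / (x i - x m)
    = P * ∑ c ∈ μ.cells.erase cm,
        ((∑ d ∈ μ.cells.filter (fun d => d.2 = c.2 ∧ d ≠ c), (x (en c) - x (en d))⁻¹)
          + ∑ d ∈ (μ.cells.erase cm).filter (fun d => d.2 = cm.2),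
              (x (en cm) - x (en d))⁻¹) * (x (en c) - x (en cm))⁻¹ := by
    calc ∑ i ∈ (Finset.Icc 1 n).filter (· ≠ m),
          (pd i (specht μ ent) x + pd m (specht μ ent) x) / (x i - x m)
        = ∑ i ∈ (Finset.Icc 1 n).filter (· ≠ m),
            P * ((∑ p ∈ F, ((if en p.2 = i then (1:ℝ) else 0) - (if en p.1 = i then 1 else 0))
                / (x (en p.2) - x (en p.1)))
              + (∑ p ∈ F, ((if en p.2 = m then (1:ℝ) else 0) - (if en p.1 = m then 1 else 0))
                / (x (en p.2) - x (en p.1)))) / (x i - x m) := by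
          refine Finset.sum_congr rfl fun i _ => ?_
          rw [hD1x i, hD1x m]
          ring
      _ = ∑ c ∈ μ.cells.erase cm,
            P * ((∑ p ∈ F, ((if en p.2 = en c then (1:ℝ) else 0)
                  - (if en p.1 = en c then 1 else 0)) / (x (en p.2) - x (en p.1)))
              + (∑ p ∈ F, ((if en p.2 = m then (1:ℝ) else 0) - (if en p.1 = m then 1 else 0))
                / (x (en p.2) - x (en p.1)))) / (x (en c) - x m) :=
          hEcell (fun i =>
            P * ((∑ p ∈ F, ((if en p.2 = i then (1:ℝ) else 0) - (if en p.1 = i then 1 else 0))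
                / (x (en p.2) - x (en p.1)))
              + (∑ p ∈ F, ((if en p.2 = m then (1:ℝ) else 0) - (if en p.1 = m then 1 else 0))
                / (x (en p.2) - x (en p.1)))) / (x i - x m))
      _ = P * ∑ c ∈ μ.cells.erase cm,
            ((∑ d ∈ μ.cells.filter (fun d => d.2 = c.2 ∧ d ≠ c), (x (en c) - x (en d))⁻¹)
              + ∑ d ∈ (μ.cells.erase cm).filter (fun d => d.2 = cm.2),
                  (x (en cm) - x (en d))⁻¹) * (x (en c) - x (en cm))⁻¹ := by
          rw [Finset.mul_sum]
          refine Finset.sum_congr rfl fun c hc => ?_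
          have hcA := (Finset.mem_erase.1 hc).2
          rw [hLcell c hcA (en c) rfl, hLcell cm hcmA m hcm, hSfil, ← hcm]
          ring
  have hlast : ∑ i ∈ (Finset.Icc 1 n).filter (· ≠ m),
        ∑ j ∈ (Finset.Icc 1 n).filter (fun j => j ≠ i ∧ j ≠ m),
          specht μ ent x / ((x i - x m) * (x j - x m))
      = P * ∑ c ∈ μ.cells.erase cm, ∑ d ∈ (μ.cells.erase cm).erase c,
          ((x (en c) - x (en cm)) * (x (en d) - x (en cm)))⁻¹ := by
    calc ∑ i ∈ (Finset.Icc 1 n).filter (· ≠ m),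
          ∑ j ∈ (Finset.Icc 1 n).filter (fun j => j ≠ i ∧ j ≠ m),
            specht μ ent x / ((x i - x m) * (x j - x m))
        = ∑ i ∈ (Finset.Icc 1 n).filter (· ≠ m),
            ∑ j ∈ (Finset.Icc 1 n).filter (fun j => j ≠ i ∧ j ≠ m),
              P * ((x i - x m) * (x j - x m))⁻¹ := by
          refine Finset.sum_congr rfl fun i _ => Finset.sum_congr rfl fun j _ => ?_
          rw [hPsp, div_eq_mul_inv]
      _ = ∑ c ∈ μ.cells.erase cm,
            ∑ j ∈ (Finset.Icc 1 n).filter (fun j => j ≠ en c ∧ j ≠ m),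
              P * ((x (en c) - x m) * (x j - x m))⁻¹ :=
          hEcell (fun i => ∑ j ∈ (Finset.Icc 1 n).filter (fun j => j ≠ i ∧ j ≠ m),
            P * ((x i - x m) * (x j - x m))⁻¹)
      _ = ∑ c ∈ μ.cells.erase cm, ∑ d ∈ (μ.cells.erase cm).erase c,
            P * ((x (en c) - x m) * (x (en d) - x m))⁻¹ := by
          refine Finset.sum_congr rfl fun c hc => ?_
          exact hEcell2 c hc (fun j => P * ((x (en c) - x m) * (x j - x m))⁻¹)
      _ = P * ∑ c ∈ μ.cells.erase cm, ∑ d ∈ (μ.cells.erase cm).erase c,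
            ((x (en c) - x (en cm)) * (x (en d) - x (en cm)))⁻¹ := by
          rw [Finset.mul_sum]
          refine Finset.sum_congr rfl fun c _ => ?_
          rw [Finset.mul_sum, ← hcm]
  rw [hD2x, hmid, hlast, hQcell, hLcell cm hcmA m hcm, hSfil]
  have hie : insert cm (μ.cells.erase cm) = μ.cells := Finset.insert_erase hcmA
  have HC := core_alg (μ.cells.erase cm) cm (fun c => x (en c)) (Finset.notMem_erase _ _)
    (by rw [hie]; exact hvne) (by rw [hie]; exact hcol)
  rw [hie] at HC
  linear_combination P * HC
end

section
/- With the notation α_T(i,j) = ψ_{T^t}(i,j) − s_i s_j/3 and q_i = (−1)^{s_i+1} as above, define Y(i,j,k) = (q_j/3)(α_T(i,j) α_T(j,k) − (1/3) α_T(i,k)) for distinct i,j,k. Then Y(i,j,k) = Y(j,i,k) for all distinct triples i,j,k. -/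
open Finset

/-- `psi m T i j` is the number of columns of the 3-column tableau `T` (with `m` rows)
containing both entries `i` and `j`, with `psi m T i i = 0`. -/
def psi (m : ℕ) {μ : YoungDiagram} (T : SemistandardYoungTableau μ) (i j : ℕ) : ℕ :=
  if i = j then 0 else
    ((Finset.range 3).filter (fun c =>
      (∃ r ∈ Finset.range m, T r c = i) ∧ (∃ r ∈ Finset.range m, T r c = j))).card

/-- `α_T(i,j) = ψ_{T^t}(i,j) - s i * s j / 3`, where the column-strict tableau `T` here plays
the role of the conjugate `T^t` of the row-strict tableau of the paper. -/
noncomputable def alphaT (m : ℕ) {μ : YoungDiagram} (T : SemistandardYoungTableau μ)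
    (s : ℕ → ℕ) (i j : ℕ) : ℝ :=
  (psi m T i j : ℝ) - (s i : ℝ) * (s j : ℝ) / 3

/-- `q i = (-1)^(s i + 1)`. -/
noncomputable def qs (s : ℕ → ℕ) (i : ℕ) : ℝ := (-1 : ℝ) ^ (s i + 1)

/-- `Y(i,j,k) = (q_j/3)(α_T(i,j) α_T(j,k) − α_T(i,k)/3)`. -/
noncomputable def Yfun (m : ℕ) {μ : YoungDiagram} (T : SemistandardYoungTableau μ)
    (s : ℕ → ℕ) (i j k : ℕ) : ℝ :=
  (qs s j / 3) * (alphaT m T s i j * alphaT m T s j k - alphaT m T s i k / 3)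

/-- The set of columns of `T` containing the entry `x`. -/
def Cset (m : ℕ) {μ : YoungDiagram} (T : SemistandardYoungTableau μ) (x : ℕ) : Finset ℕ :=
  (Finset.range 3).filter fun c => ∃ r ∈ Finset.range m, T r c = x

/-- The column sets of `x` and `y` are equal or complementary. -/
def RelC (m : ℕ) {μ : YoungDiagram} (T : SemistandardYoungTableau μ) (x y : ℕ) : Prop :=
  Cset m T y = Cset m T x ∨ Cset m T y = Finset.range 3 \ Cset m T x

instance (m : ℕ) {μ : YoungDiagram} (T : SemistandardYoungTableau μ) (x y : ℕ) :
    Decidable (RelC m T x y) := by unfold RelC; infer_instance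

lemma key3 (A B : Finset ℕ) (hA : A ⊆ Finset.range 3) (hB : B ⊆ Finset.range 3)
    (hA2 : A.card = 1 ∨ A.card = 2) (hB2 : B.card = 1 ∨ B.card = 2) :
    ((A ∩ B).card : ℝ) - (A.card : ℝ) * B.card / 3 =
      (-1:ℝ)^(A.card+1) * (-1)^(B.card+1) *
        (if B = A ∨ B = Finset.range 3 \ A then 2/3 else -1/3) := by
  have D : ∀ A ∈ (Finset.range 3).powerset, ∀ B ∈ (Finset.range 3).powerset,
      (A.card = 1 ∨ A.card = 2) → (B.card = 1 ∨ B.card = 2) →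
      (A ∩ B).card = if (B = A ∨ B = Finset.range 3 \ A) then
          (if A.card = B.card then A.card else 0)
        else (if A.card = B.card then A.card - 1 else 1) := by decide
  have h := D A (Finset.mem_powerset.2 hA) B (Finset.mem_powerset.2 hB) hA2 hB2
  by_cases hR : (B = A ∨ B = Finset.range 3 \ A) <;>
    rcases hA2 with h1 | h1 <;> rcases hB2 with h2 | h2 <;>
    simp only [hR, h1, h2, if_true, if_false, if_pos, if_neg] at h ⊢ <;>
    norm_num [h, h1, h2]

lemma card_col {m d : ℕ} {s : ℕ → ℕ} {μ : YoungDiagram}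
    (hrect : μ.cells = Finset.range m ×ˢ Finset.range 3)
    (T : SemistandardYoungTableau μ) (hT : hasContent T d s)
    {x : ℕ} (hx : x ∈ Finset.Icc 1 d) :
    (Cset m T x).card = s x := by
  have hx' := hT x
  rw [if_pos hx, hrect] at hx'
  rw [Cset, ← hx']
  rw [Finset.card_eq_sum_card_fiberwise
    (f := Prod.snd) (t := Finset.range 3)
    (fun z hz => by
      simp only [Finset.mem_coe, Finset.mem_filter, Finset.mem_product] at hz
      exact hz.1.2)]
  rw [Finset.card_filter]
  refine Finset.sum_congr rfl fun c hc => ?_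
  simp only [Finset.mem_range] at hc
  have hmem : ∀ b : ℕ, b < m → (b, c) ∈ μ := by
    intro b hb
    rw [← YoungDiagram.mem_cells, hrect, Finset.mem_product]
    exact ⟨Finset.mem_range.2 hb, Finset.mem_range.2 hc⟩
  have himg : ((Finset.range m ×ˢ Finset.range 3).filter fun z => T z.1 z.2 = x).filter
      (fun z => z.2 = c) = ((Finset.range m).filter fun r => T r c = x).image (fun r => (r, c)) := by
    ext ⟨a, b⟩
    simp only [Finset.mem_filter, Finset.mem_product, Finset.mem_image, Finset.mem_range]
    constructor
    · rintro ⟨⟨⟨ha, hb⟩, hv⟩, rfl⟩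
      exact ⟨a, ⟨ha, hv⟩, rfl⟩
    · rintro ⟨r, ⟨hr, hv⟩, heq⟩
      obtain ⟨rfl, rfl⟩ : r = a ∧ c = b := by
        constructor <;> [exact congrArg Prod.fst heq; exact congrArg Prod.snd heq]
      exact ⟨⟨⟨hr, hc⟩, hv⟩, rfl⟩
  rw [himg, Finset.card_image_of_injective _ (fun a b hab => congrArg Prod.fst hab)]
  have hle : ((Finset.range m).filter fun r => T r c = x).card ≤ 1 := by
    rw [Finset.card_le_one]
    intro a ha b hb
    simp only [Finset.mem_filter, Finset.mem_range] at ha hb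
    by_contra hne
    rcases lt_or_gt_of_ne hne with h | h
    · have := T.col_strict h (hmem b hb.1)
      omega
    · have := T.col_strict h (hmem a ha.1)
      omega
  split_ifs with h
  · obtain ⟨r, hr, hv⟩ := h
    have : 0 < ((Finset.range m).filter fun r => T r c = x).card :=
      Finset.card_pos.2 ⟨r, Finset.mem_filter.2 ⟨hr, hv⟩⟩
    omega
  · push_neg at h
    rw [Finset.card_eq_zero.2]
    rw [Finset.filter_eq_empty_iff]
    intro r hr
    exact h r hr

lemma psi_eq (m : ℕ) {μ : YoungDiagram} (T : SemistandardYoungTableau μ) {x y : ℕ}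
    (hxy : x ≠ y) : psi m T x y = (Cset m T x ∩ Cset m T y).card := by
  rw [psi, if_neg hxy, Cset, Cset, ← Finset.filter_and]

lemma alphaT_eq {m d : ℕ} {s : ℕ → ℕ} {μ : YoungDiagram}
    (hrect : μ.cells = Finset.range m ×ˢ Finset.range 3)
    (T : SemistandardYoungTableau μ) (hT : hasContent T d s)
    (hs : ∀ i ∈ Finset.Icc 1 d, s i = 1 ∨ s i = 2)
    {x y : ℕ} (hx : x ∈ Finset.Icc 1 d) (hy : y ∈ Finset.Icc 1 d) (hxy : x ≠ y) :
    alphaT m T s x y = qs s x * qs s y * (if RelC m T x y then 2/3 else -1/3) := by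
  have hcx := card_col hrect T hT hx
  have hcy := card_col hrect T hT hy
  have h := key3 (Cset m T x) (Cset m T y) (Finset.filter_subset _ _) (Finset.filter_subset _ _)
    (hcx ▸ hs x hx) (hcy ▸ hs y hy)
  rw [hcx, hcy] at h
  unfold RelC qs alphaT
  rw [psi_eq m T hxy, h]

lemma psi_symm (m : ℕ) {μ : YoungDiagram} (T : SemistandardYoungTableau μ) (x y : ℕ) :
    psi m T x y = psi m T y x := by
  by_cases h : x = y
  · subst h; rfl
  · rw [psi, psi, if_neg h, if_neg (Ne.symm h)]
    congr 1
    ext c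
    simp only [Finset.mem_filter]
    tauto

lemma alphaT_symm (m : ℕ) {μ : YoungDiagram} (T : SemistandardYoungTableau μ)
    (s : ℕ → ℕ) (x y : ℕ) : alphaT m T s x y = alphaT m T s y x := by
  rw [alphaT, alphaT, psi_symm, mul_comm]

lemma relC_trans (m : ℕ) {μ : YoungDiagram} (T : SemistandardYoungTableau μ)
    {i j : ℕ} (h : RelC m T i j) (k : ℕ) : (RelC m T i k ↔ RelC m T j k) := by
  rcases h with h | h
  · rw [RelC, RelC, h]
  · rw [RelC, RelC, h]
    have : Finset.range 3 \ (Finset.range 3 \ Cset m T i) = Cset m T i := by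
      have hsub : Cset m T i ⊆ Finset.range 3 := Finset.filter_subset _ _
      ext c
      simp only [Finset.mem_sdiff]
      constructor
      · rintro ⟨h1, h2⟩
        by_contra hc
        exact h2 ⟨h1, hc⟩
      · intro hc
        exact ⟨hsub hc, fun h' => h'.2 hc⟩
    rw [this]
    exact or_comm

/-- `Y(i,j,k) = Y(j,i,k)` for distinct `i, j, k`. -/
theorem Y_symmetric
    (m d : ℕ) (s : ℕ → ℕ)
    (hs : ∀ i ∈ Finset.Icc 1 d, s i = 1 ∨ s i = 2)
    (hsum : ∑ i ∈ Finset.Icc 1 d, s i = 3 * m)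
    (μ : YoungDiagram) (hrect : μ.cells = Finset.range m ×ˢ Finset.range 3)
    (T : SemistandardYoungTableau μ) (hT : hasContent T d s)
    (i j k : ℕ) (hi : i ∈ Finset.Icc 1 d) (hj : j ∈ Finset.Icc 1 d) (hk : k ∈ Finset.Icc 1 d)
    (hij : i ≠ j) (hik : i ≠ k) (hjk : j ≠ k) :
    Yfun m T s i j k = Yfun m T s j i k := by
  have hqi : qs s i = 1 ∨ qs s i = -1 := by
    rcases hs i hi with h | h <;> norm_num [qs, h]
  have hqj : qs s j = 1 ∨ qs s j = -1 := by
    rcases hs j hj with h | h <;> norm_num [qs, h]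
  have hqk : qs s k = 1 ∨ qs s k = -1 := by
    rcases hs k hk with h | h <;> norm_num [qs, h]
  rw [Yfun, Yfun, alphaT_symm m T s j i,
    alphaT_eq hrect T hT hs hi hj hij,
    alphaT_eq hrect T hT hs hj hk hjk,
    alphaT_eq hrect T hT hs hi hk hik]
  by_cases hR : RelC m T i j
  · have h2 : RelC m T j k ↔ RelC m T i k := (relC_trans m T hR k).symm
    rcases hqi with h1 | h1 <;> rcases hqj with h2' | h2' <;> rcases hqk with h3 | h3 <;>
      by_cases h4 : RelC m T i k <;>
      simp only [h1, h2', h3, hR, h4, h2, if_true, if_false, iff_true, iff_false,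
        if_pos, if_neg, not_false_iff] <;> norm_num
  · rcases hqi with h1 | h1 <;> rcases hqj with h2' | h2' <;> rcases hqk with h3 | h3 <;>
      by_cases h4 : RelC m T i k <;> by_cases h5 : RelC m T j k <;>
      simp only [h1, h2', h3, hR, h4, h5, if_true, if_false,
        if_pos, if_neg, not_false_iff] <;> norm_num
end

section
/- With α_T and q_i as above, define A(i,j,k) = q_j α_T(i,j) α_T(j,k) + (1/3) q_i α_T(j,k) + (1/3) q_k α_T(i,j). Then A(i,j,k) = A(j,i,k) for all distinct i, j, k. -/
open Finset

/-- `A(i,j,k) = q_j α_T(i,j) α_T(j,k) + (1/3) q_i α_T(j,k) + (1/3) q_k α_T(i,j)`. -/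
noncomputable def Afun (m : ℕ) {μ : YoungDiagram} (T : SemistandardYoungTableau μ)
    (s : ℕ → ℕ) (i j k : ℕ) : ℝ :=
  qs s j * alphaT m T s i j * alphaT m T s j k
    + (1/3) * qs s i * alphaT m T s j k + (1/3) * qs s k * alphaT m T s i j

/-- Integer sign `(-1)^(n+1)` for `n ∈ {1,2}`. -/
def sgnZ (n : ℕ) : ℤ := if n = 1 then 1 else -1

/-- The finite combinatorial core: for subsets of `{0,1,2}` of cardinality 1 or 2, an
integer identity among the cardinalities of pairwise intersections. -/
lemma key_identity : ∀ Ci ∈ (Finset.range 3).powerset, ∀ Cj ∈ (Finset.range 3).powerset,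
    ∀ Ck ∈ (Finset.range 3).powerset,
    (Ci.card = 1 ∨ Ci.card = 2) → (Cj.card = 1 ∨ Cj.card = 2) → (Ck.card = 1 ∨ Ck.card = 2) →
    sgnZ Cj.card * (3*((Ci ∩ Cj).card : ℤ) - Ci.card*Cj.card) * (3*((Cj ∩ Ck).card : ℤ) - Cj.card*Ck.card)
      + sgnZ Ci.card * (3*((Cj ∩ Ck).card : ℤ) - Cj.card*Ck.card)
      = sgnZ Ci.card * (3*((Ci ∩ Cj).card : ℤ) - Ci.card*Cj.card) * (3*((Ci ∩ Ck).card : ℤ) - Ci.card*Ck.card)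
      + sgnZ Cj.card * (3*((Ci ∩ Ck).card : ℤ) - Ci.card*Ck.card) := by decide

/-- The number of columns containing entry `i` equals its content `s i`. -/
lemma card_cols (m d : ℕ) (s : ℕ → ℕ) (μ : YoungDiagram)
    (hrect : μ.cells = Finset.range m ×ˢ Finset.range 3)
    (T : SemistandardYoungTableau μ) (hT : hasContent T d s)
    (i : ℕ) (hi : i ∈ Finset.Icc 1 d) :
    ((Finset.range 3).filter (fun c => ∃ r ∈ Finset.range m, T r c = i)).card = s i := by
  have h := hT i
  rw [if_pos hi] at h
  rw [← h]
  have himg : (μ.cells.filter fun c => T c.1 c.2 = i).image Prod.snd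
      = (Finset.range 3).filter (fun c => ∃ r ∈ Finset.range m, T r c = i) := by
    ext c
    simp only [Finset.mem_image, Finset.mem_filter, Finset.mem_range, hrect,
      Finset.mem_product, Prod.exists]
    constructor
    · rintro ⟨r, c', ⟨⟨hr, hc⟩, hT'⟩, rfl⟩
      exact ⟨hc, r, hr, hT'⟩
    · rintro ⟨hc, r, hr, hT'⟩
      exact ⟨r, c, ⟨⟨hr, hc⟩, hT'⟩, rfl⟩
  have hinj : Set.InjOn (Prod.snd : ℕ × ℕ → ℕ) ↑(μ.cells.filter fun c => T c.1 c.2 = i) := by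
    rintro ⟨r1, c1⟩ h1 ⟨r2, c2⟩ h2 hcc
    simp only [Prod.snd] at hcc
    subst hcc
    simp only [Finset.coe_filter, Set.mem_setOf_eq] at h1 h2
    rcases lt_trichotomy r1 r2 with hlt | heq | hlt
    · have := T.col_strict hlt ((YoungDiagram.mem_cells _).mp h2.1)
      rw [h1.2, h2.2] at this
      exact absurd this (lt_irrefl _)
    · rw [heq]
    · have := T.col_strict hlt ((YoungDiagram.mem_cells _).mp h1.1)
      rw [h1.2, h2.2] at this
      exact absurd this (lt_irrefl _)
  rw [← himg, Finset.card_image_of_injOn hinj]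

lemma psi_eq_inter (m : ℕ) {μ : YoungDiagram} (T : SemistandardYoungTableau μ)
    (i j : ℕ) (hij : i ≠ j) :
    psi m T i j = (((Finset.range 3).filter fun c => ∃ r ∈ Finset.range m, T r c = i) ∩
      ((Finset.range 3).filter fun c => ∃ r ∈ Finset.range m, T r c = j)).card := by
  rw [psi, if_neg hij, Finset.filter_and]

/-- `A(i,j,k) = A(j,i,k)` for distinct `i, j, k`. -/
theorem A_symmetric
    (m d : ℕ) (s : ℕ → ℕ)
    (hs : ∀ i ∈ Finset.Icc 1 d, s i = 1 ∨ s i = 2)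
    (hsum : ∑ i ∈ Finset.Icc 1 d, s i = 3 * m)
    (μ : YoungDiagram) (hrect : μ.cells = Finset.range m ×ˢ Finset.range 3)
    (T : SemistandardYoungTableau μ) (hT : hasContent T d s)
    (i j k : ℕ) (hi : i ∈ Finset.Icc 1 d) (hj : j ∈ Finset.Icc 1 d) (hk : k ∈ Finset.Icc 1 d)
    (hij : i ≠ j) (hik : i ≠ k) (hjk : j ≠ k) :
    Afun m T s i j k = Afun m T s j i k := by
  classical
  set Ci : Finset ℕ := (Finset.range 3).filter (fun c => ∃ r ∈ Finset.range m, T r c = i) with hCi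
  set Cj : Finset ℕ := (Finset.range 3).filter (fun c => ∃ r ∈ Finset.range m, T r c = j) with hCj
  set Ck : Finset ℕ := (Finset.range 3).filter (fun c => ∃ r ∈ Finset.range m, T r c = k) with hCk
  have hci : Ci.card = s i := card_cols m d s μ hrect T hT i hi
  have hcj : Cj.card = s j := card_cols m d s μ hrect T hT j hj
  have hck : Ck.card = s k := card_cols m d s μ hrect T hT k hk
  have hPi : Ci ∈ (Finset.range 3).powerset := Finset.mem_powerset.mpr (Finset.filter_subset _ _)
  have hPj : Cj ∈ (Finset.range 3).powerset := Finset.mem_powerset.mpr (Finset.filter_subset _ _)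
  have hPk : Ck ∈ (Finset.range 3).powerset := Finset.mem_powerset.mpr (Finset.filter_subset _ _)
  have K := key_identity Ci hPi Cj hPj Ck hPk
    (by rw [hci]; exact hs i hi) (by rw [hcj]; exact hs j hj) (by rw [hck]; exact hs k hk)
  have e1 : psi m T i j = (Ci ∩ Cj).card := psi_eq_inter m T i j hij
  have e1' : psi m T j i = (Ci ∩ Cj).card := by
    rw [psi_eq_inter m T j i (Ne.symm hij), Finset.inter_comm]
  have e2 : psi m T j k = (Cj ∩ Ck).card := psi_eq_inter m T j k hjk
  have e3 : psi m T i k = (Ci ∩ Ck).card := psi_eq_inter m T i k hik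
  rcases hs i hi with h1 | h1 <;> rcases hs j hj with h2 | h2 <;> rcases hs k hk with h3 | h3 <;>
  · rw [hci, hcj, hck, h1, h2, h3] at K
    norm_num [sgnZ] at K
    have KR := congrArg (fun t : ℤ => (t : ℝ)) K
    push_cast at KR
    simp only [Afun, alphaT, qs, e1, e1', e2, e3, h1, h2, h3]
    push_cast
    linear_combination KR / 9
end

section
/- Let T be a row-strict Young tableau of rectangular shape π = (n/3, n/3, n/3) with content ς = (s_1,...,s_d), s_i ∈ {1,2}, q_i = (−1)^{s_i+1}, Σ_i s_i = n, α_T(i,j) = ψ_{T^t}(i,j) − s_i s_j/3, and Y(i,j,k) = (q_j/3)(α_T(i,j)α_T(j,k) − α_T(i,k)/3). Then Σ_{j=1}^d Σ_{i≠j} Σ_{k≠i,j} Y(i,j,k) + (1/3) Σ_{j=1}^d q_j Σ_{i≠j} α_T(i,j) + (2/27) Σ_{j=1}^d q_j = 0. -/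
open Finset

namespace YAux
variable {m d : ℕ} {s : ℕ → ℕ} {μ : YoungDiagram} {T : SemistandardYoungTableau μ}

def Col (m : ℕ) {μ : YoungDiagram} (T : SemistandardYoungTableau μ) (i : ℕ) : Finset ℕ :=
  (Finset.range 3).filter (fun c => ∃ r ∈ Finset.range m, T r c = i)

lemma psi_symm (m : ℕ) (T : SemistandardYoungTableau μ) (i j : ℕ) :
    psi m T i j = psi m T j i := by
  unfold psi
  by_cases h : i = j
  · simp [h]
  · rw [if_neg h, if_neg (Ne.symm h)]
    congr 1
    apply Finset.filter_congr
    intro c _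
    exact and_comm

lemma alpha_symm (m : ℕ) (T : SemistandardYoungTableau μ) (s : ℕ → ℕ) (i j : ℕ) :
    alphaT m T s i j = alphaT m T s j i := by
  unfold alphaT; rw [psi_symm]; ring

lemma psi_eq_card_inter (m : ℕ) (T : SemistandardYoungTableau μ) {i j : ℕ} (hij : i ≠ j) :
    psi m T i j = (Col m T i ∩ Col m T j).card := by
  unfold psi Col
  rw [if_neg hij, ← Finset.filter_and]

lemma entry_mem (hT : hasContent T d s) {r c : ℕ} (h : (r, c) ∈ μ.cells) :
    T r c ∈ Finset.Icc 1 d := by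
  by_contra hk
  have h0 := hT (T r c)
  rw [if_neg hk, Finset.card_eq_zero] at h0
  have : (r, c) ∈ μ.cells.filter (fun x => T x.1 x.2 = T r c) :=
    Finset.mem_filter.2 ⟨h, rfl⟩
  rw [h0] at this
  exact absurd this (Finset.notMem_empty _)

lemma col_card (hrect : μ.cells = Finset.range m ×ˢ Finset.range 3)
    (hT : hasContent T d s) {i : ℕ} (hi : i ∈ Finset.Icc 1 d) :
    (Col m T i).card = s i := by
  have h0 := hT i
  rw [if_pos hi] at h0
  rw [← h0]
  symm
  apply Finset.card_bij (fun c _ => c.2)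
  · intro a ha
    rw [Finset.mem_filter, hrect, Finset.mem_product, Finset.mem_range, Finset.mem_range] at ha
    exact Finset.mem_filter.2 ⟨Finset.mem_range.2 ha.1.2, a.1, Finset.mem_range.2 ha.1.1, ha.2⟩
  · intro a ha b hb hab
    rw [Finset.mem_filter, hrect, Finset.mem_product, Finset.mem_range, Finset.mem_range] at ha hb
    have hcol : a.2 = b.2 := hab
    ext
    · by_contra hne
      rcases Nat.lt_or_ge a.1 b.1 with h | h
      · have := T.col_strict h (by
          rw [← YoungDiagram.mem_cells, hrect, Finset.mem_product]
          exact ⟨Finset.mem_range.2 hb.1.1, Finset.mem_range.2 hb.1.2⟩)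
        have hb2' : T b.1 a.2 = i := by rw [hcol]; exact hb.2
        rw [← hcol, ha.2, hb2'] at this
        exact lt_irrefl _ this
      · rcases Nat.lt_or_ge b.1 a.1 with h' | h'
        · have := T.col_strict h' (by
            rw [← YoungDiagram.mem_cells, hrect, Finset.mem_product]
            exact ⟨Finset.mem_range.2 ha.1.1, Finset.mem_range.2 ha.1.2⟩)
          have hb2' : T b.1 a.2 = i := by rw [hcol]; exact hb.2
          rw [ha.2, hb2'] at this
          exact lt_irrefl _ this
        · exact hne (le_antisymm h' h)
    · exact hcol
  · intro c hc
    rw [Col, Finset.mem_filter] at hc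
    obtain ⟨r, hr, hrc⟩ := hc.2
    exact ⟨(r, c), Finset.mem_filter.2 ⟨by
      rw [hrect, Finset.mem_product]; exact ⟨hr, hc.1⟩, hrc⟩, rfl⟩

end YAux

namespace YAux
variable {m d : ℕ} {s : ℕ → ℕ} {μ : YoungDiagram} {T : SemistandardYoungTableau μ}

lemma image_col_card (hrect : μ.cells = Finset.range m ×ˢ Finset.range 3) {c : ℕ} (hc : c < 3) :
    ((Finset.range m).image (fun r => T r c)).card = m := by
  rw [Finset.card_image_of_injOn, Finset.card_range]
  intro r1 h1 r2 h2 he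
  by_contra hne
  rcases Nat.lt_or_ge r1 r2 with h | h
  · have := T.col_strict h (by
      rw [← YoungDiagram.mem_cells, hrect, Finset.mem_product]
      exact ⟨h2, Finset.mem_range.2 hc⟩)
    exact absurd he (ne_of_lt this)
  · have h' : r2 < r1 := lt_of_le_of_ne h (Ne.symm hne)
    have := T.col_strict h' (by
      rw [← YoungDiagram.mem_cells, hrect, Finset.mem_product]
      exact ⟨h1, Finset.mem_range.2 hc⟩)
    exact absurd he.symm (ne_of_lt this)

lemma filter_col_eq (hrect : μ.cells = Finset.range m ×ˢ Finset.range 3)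
    (hT : hasContent T d s) {c : ℕ} (hc : c < 3) {j : ℕ} :
    ((Finset.Icc 1 d).filter (fun i => i ≠ j ∧ c ∈ Col m T i))
      = ((Finset.range m).image (fun r => T r c)).erase j := by
  ext i
  simp only [Finset.mem_filter, Finset.mem_erase, Finset.mem_image]
  constructor
  · rintro ⟨hi, hij, hcol⟩
    rw [Col, Finset.mem_filter] at hcol
    obtain ⟨r, hr, hrc⟩ := hcol.2
    exact ⟨hij, r, hr, hrc⟩
  · rintro ⟨hij, r, hr, hrc⟩
    have hcell : (r, c) ∈ μ.cells := by
      rw [hrect, Finset.mem_product]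
      exact ⟨hr, Finset.mem_range.2 hc⟩
    have hIcc : i ∈ Finset.Icc 1 d := hrc ▸ entry_mem hT hcell
    exact ⟨hIcc, hij, Finset.mem_filter.2 ⟨Finset.mem_range.2 hc, r, hr, hrc⟩⟩

lemma rowsum (hrect : μ.cells = Finset.range m ×ˢ Finset.range 3)
    (hT : hasContent T d s) {j : ℕ} (hj : j ∈ Finset.Icc 1 d) :
    ∑ i ∈ (Finset.Icc 1 d).filter (· ≠ j), psi m T i j = s j * (m - 1) := by
  have key : ∀ i ∈ (Finset.Icc 1 d).filter (· ≠ j),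
      psi m T i j = ∑ c ∈ Col m T j, (if c ∈ Col m T i then 1 else 0) := by
    intro i hi
    rw [psi_eq_card_inter m T (Finset.mem_filter.1 hi).2, Finset.inter_comm,
      ← Finset.filter_mem_eq_inter, Finset.card_filter]
  rw [Finset.sum_congr rfl key, Finset.sum_comm]
  have inner : ∀ c ∈ Col m T j,
      (∑ i ∈ (Finset.Icc 1 d).filter (· ≠ j), if c ∈ Col m T i then 1 else 0) = m - 1 := by
    intro c hcj
    have hc3 : c < 3 := Finset.mem_range.1 (Finset.mem_filter.1 hcj).1
    have hjmem : j ∈ (Finset.range m).image (fun r => T r c) := by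
      obtain ⟨r, hr, hrc⟩ := (Finset.mem_filter.1 hcj).2
      exact Finset.mem_image.2 ⟨r, hr, hrc⟩
    rw [← Finset.card_filter, Finset.filter_filter, filter_col_eq hrect hT hc3,
      Finset.card_erase_of_mem hjmem, image_col_card hrect hc3]
  rw [Finset.sum_congr rfl inner, Finset.sum_const, col_card hrect hT hj, smul_eq_mul]

end YAux

namespace YAux
variable {m d : ℕ} {s : ℕ → ℕ} {μ : YoungDiagram} {T : SemistandardYoungTableau μ}

lemma psi_self (m : ℕ) (T : SemistandardYoungTableau μ) (i : ℕ) : psi m T i i = 0 := by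
  simp [psi]

lemma m_pos (hs : ∀ i ∈ Finset.Icc 1 d, s i = 1 ∨ s i = 2)
    (hsum : ∑ i ∈ Finset.Icc 1 d, s i = 3 * m) {i : ℕ} (hi : i ∈ Finset.Icc 1 d) :
    1 ≤ m := by
  have h1 : 1 ≤ s i := by rcases hs i hi with h | h <;> omega
  have h2 : s i ≤ ∑ k ∈ Finset.Icc 1 d, s k :=
    Finset.single_le_sum (fun k _ => Nat.zero_le _) hi
  omega

lemma sumAll (hrect : μ.cells = Finset.range m ×ˢ Finset.range 3)
    (hT : hasContent T d s)
    (hs : ∀ i ∈ Finset.Icc 1 d, s i = 1 ∨ s i = 2)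
    (hsum : ∑ i ∈ Finset.Icc 1 d, s i = 3 * m)
    {i : ℕ} (hi : i ∈ Finset.Icc 1 d) :
    ∑ k ∈ Finset.Icc 1 d, alphaT m T s i k = -(s i : ℝ) := by
  have hm : 1 ≤ m := m_pos hs hsum hi
  have hpsiN : ∑ k ∈ Finset.Icc 1 d, psi m T i k = s i * (m - 1) := by
    have h0 : ∑ k ∈ (Finset.Icc 1 d).filter (· ≠ i), psi m T k i = s i * (m - 1) :=
      rowsum hrect hT hi
    rw [Finset.filter_ne'] at h0
    rw [← Finset.sum_erase (Finset.Icc 1 d) (psi_self m T i), ← h0]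
    exact Finset.sum_congr rfl fun k _ => psi_symm m T i k
  have hpsi2 : ∑ k ∈ Finset.Icc 1 d, (psi m T i k : ℝ) = (s i : ℝ) * ((m : ℝ) - 1) := by
    rw [← Nat.cast_sum, hpsiN]
    push_cast [Nat.cast_sub hm]
    ring
  have hsR : (∑ k ∈ Finset.Icc 1 d, (s k : ℝ)) = 3 * m := by exact_mod_cast hsum
  simp only [alphaT]
  rw [Finset.sum_sub_distrib, hpsi2]
  have : ∑ k ∈ Finset.Icc 1 d, (s i : ℝ) * (s k : ℝ) / 3
      = (s i : ℝ) * (3 * (m : ℝ)) / 3 := by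
    rw [← Finset.sum_div, ← Finset.mul_sum, hsR]
  rw [this]
  ring

lemma alpha_self (m : ℕ) (T : SemistandardYoungTableau μ) (s : ℕ → ℕ) (j : ℕ) :
    alphaT m T s j j = -((s j : ℝ) * (s j) / 3) := by
  simp [alphaT, psi_self]

lemma sumB (hrect : μ.cells = Finset.range m ×ˢ Finset.range 3)
    (hT : hasContent T d s)
    (hs : ∀ i ∈ Finset.Icc 1 d, s i = 1 ∨ s i = 2)
    (hsum : ∑ i ∈ Finset.Icc 1 d, s i = 3 * m)
    {j : ℕ} (hj : j ∈ Finset.Icc 1 d) :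
    ∑ i ∈ (Finset.Icc 1 d).filter (· ≠ j), alphaT m T s i j = -2/3 := by
  have h1 := sumAll hrect hT hs hsum hj
  have hsymm : ∀ i ∈ (Finset.Icc 1 d).filter (· ≠ j),
      alphaT m T s i j = alphaT m T s j i := fun i _ => alpha_symm m T s i j
  rw [Finset.sum_congr rfl hsymm, Finset.filter_ne', Finset.sum_erase_eq_sub hj, h1,
    alpha_self]
  rcases hs j hj with h | h <;> rw [h] <;> norm_num

lemma quad (hrect : μ.cells = Finset.range m ×ˢ Finset.range 3)
    (hT : hasContent T d s)
    (hs : ∀ i ∈ Finset.Icc 1 d, s i = 1 ∨ s i = 2)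
    {i j : ℕ} (hi : i ∈ Finset.Icc 1 d) (hj : j ∈ Finset.Icc 1 d) (hij : i ≠ j) :
    (alphaT m T s i j) ^ 2 = 2/9 + (qs s i * qs s j / 3) * alphaT m T s i j := by
  have hci := col_card hrect hT hi
  have hcj := col_card hrect hT hj
  have hp := psi_eq_card_inter m T hij
  have h1 : psi m T i j ≤ s i := by
    rw [hp, ← hci]; exact Finset.card_le_card Finset.inter_subset_left
  have h2 : psi m T i j ≤ s j := by
    rw [hp, ← hcj]; exact Finset.card_le_card Finset.inter_subset_right
  have h3 : s i + s j ≤ psi m T i j + 3 := by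
    have hu : (Col m T i ∪ Col m T j).card ≤ 3 := by
      have : Col m T i ∪ Col m T j ⊆ Finset.range 3 :=
        Finset.union_subset (Finset.filter_subset _ _) (Finset.filter_subset _ _)
      simpa using Finset.card_le_card this
    have := Finset.card_union_add_card_inter (Col m T i) (Col m T j)
    rw [hp]
    omega
  simp only [alphaT, qs]
  set p := psi m T i j with hpdef
  clear_value p
  rcases hs i hi with hsi | hsi <;> rcases hs j hj with hsj | hsj <;>
    (rw [hsi] at h1; rw [hsj] at h2; rw [hsi, hsj] at h3;
     simp only [hsi, hsj]; interval_cases p <;> first | omega | norm_num)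

end YAux

namespace YAux

lemma swap_sum (I : Finset ℕ) (f : ℕ → ℕ → ℝ) :
    ∑ j ∈ I, ∑ i ∈ I.filter (· ≠ j), f i j
      = ∑ j ∈ I, ∑ i ∈ I.filter (· ≠ j), f j i := by
  simp only [Finset.sum_filter]
  rw [Finset.sum_comm]
  refine Finset.sum_congr rfl fun x _ => Finset.sum_congr rfl fun y _ => ?_
  by_cases h : y = x
  · simp [h]
  · simp [h, Ne.symm h]

end YAux


/-- the sum identity
`Σ_j Σ_{i≠j} Σ_{k≠i,j} Y(i,j,k) + (1/3) Σ_j q_j Σ_{i≠j} α_T(i,j) + (2/27) Σ_j q_j = 0`. -/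
theorem Y_sum_identity
    (m d : ℕ) (s : ℕ → ℕ)
    (hs : ∀ i ∈ Finset.Icc 1 d, s i = 1 ∨ s i = 2)
    (hsum : ∑ i ∈ Finset.Icc 1 d, s i = 3 * m)
    (μ : YoungDiagram) (hrect : μ.cells = Finset.range m ×ˢ Finset.range 3)
    (T : SemistandardYoungTableau μ) (hT : hasContent T d s) :
    (∑ j ∈ Finset.Icc 1 d, ∑ i ∈ (Finset.Icc 1 d).filter (· ≠ j),
        ∑ k ∈ (Finset.Icc 1 d).filter (fun k => k ≠ i ∧ k ≠ j), Yfun m T s i j k)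
    + (1/3) * ∑ j ∈ Finset.Icc 1 d,
        qs s j * ∑ i ∈ (Finset.Icc 1 d).filter (· ≠ j), alphaT m T s i j
    + (2/27) * ∑ j ∈ Finset.Icc 1 d, qs s j = 0 := by
  classical
  set I := Finset.Icc 1 d with hI
  have hBj : ∀ j ∈ I, ∑ i ∈ I.filter (· ≠ j), alphaT m T s i j = -2/3 :=
    fun j hj => YAux.sumB hrect hT hs hsum hj
  have key : ∀ j ∈ I, ∀ i ∈ I.filter (· ≠ j),
      ∑ k ∈ I.filter (fun k => k ≠ i ∧ k ≠ j), Yfun m T s i j k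
        = -((qs s i + qs s j) / 9) * alphaT m T s i j := by
    intro j hj i hi'
    obtain ⟨hi, hij⟩ := Finset.mem_filter.1 hi'
    have hij' : i ≠ j := hij
    have hfe : I.filter (fun k => k ≠ i ∧ k ≠ j) = (I.filter (· ≠ j)).erase i := by
      ext k
      simp only [Finset.mem_filter, Finset.mem_erase]
      tauto
    rw [hfe, Finset.sum_erase_eq_sub hi']
    have hsum1 : ∑ k ∈ I.filter (· ≠ j), alphaT m T s j k = -2/3 := by
      rw [← hBj j hj]
      exact Finset.sum_congr rfl fun k _ => YAux.alpha_symm m T s j k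
    have hsum2 : ∑ k ∈ I.filter (· ≠ j), alphaT m T s i k
        = -(s i : ℝ) - alphaT m T s i j := by
      rw [Finset.filter_ne', Finset.sum_erase_eq_sub hj,
        YAux.sumAll hrect hT hs hsum hi]
    have hY : ∑ k ∈ I.filter (· ≠ j), Yfun m T s i j k
        = (qs s j / 3) * (alphaT m T s i j * (-2/3)
            - (-(s i : ℝ) - alphaT m T s i j) / 3) := by
      rw [← hsum1, ← hsum2]
      simp only [Yfun, ← Finset.mul_sum]
      congr 1
      rw [Finset.sum_sub_distrib, ← Finset.mul_sum, ← Finset.sum_div]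
    rw [hY, Yfun, YAux.alpha_symm m T s j i, YAux.alpha_self]
    have hq : qs s j * qs s j = 1 := by
      rcases hs j hj with h | h <;> simp [qs, h] <;> norm_num
    have hss : (s i : ℝ) * (s i) = 3 * (s i) - 2 := by
      rcases hs i hi with h | h <;> rw [h] <;> norm_num
    have hquad := YAux.quad hrect hT hs hi hj hij'
    linear_combination (-(qs s j)/3) * hquad + (-(qs s j)/27) * hss
      + (-(qs s i) * alphaT m T s i j / 9) * hq
  have h1 : (∑ j ∈ I, ∑ i ∈ I.filter (· ≠ j),
        ∑ k ∈ I.filter (fun k => k ≠ i ∧ k ≠ j), Yfun m T s i j k)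
      = ∑ j ∈ I, ∑ i ∈ I.filter (· ≠ j),
          -((qs s i + qs s j) / 9) * alphaT m T s i j :=
    Finset.sum_congr rfl fun j hj => Finset.sum_congr rfl fun i hi => key j hj i hi
  have hmid : ∑ j ∈ I, qs s j * ∑ i ∈ I.filter (· ≠ j), alphaT m T s i j
      = ∑ j ∈ I, qs s j * (-2/3) :=
    Finset.sum_congr rfl fun j hj => by rw [hBj j hj]
  have hS2 : ∑ j ∈ I, ∑ i ∈ I.filter (· ≠ j), qs s j * alphaT m T s i j
      = (-2/3) * ∑ j ∈ I, qs s j := by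
    have : ∀ j ∈ I, ∑ i ∈ I.filter (· ≠ j), qs s j * alphaT m T s i j
        = qs s j * (-2/3) := fun j hj => by rw [← Finset.mul_sum, hBj j hj]
    rw [Finset.sum_congr rfl this, ← Finset.sum_mul]
    ring
  have hS1 : ∑ j ∈ I, ∑ i ∈ I.filter (· ≠ j), qs s i * alphaT m T s i j
      = ∑ j ∈ I, ∑ i ∈ I.filter (· ≠ j), qs s j * alphaT m T s i j := by
    rw [YAux.swap_sum I (fun i j => qs s i * alphaT m T s i j)]
    exact Finset.sum_congr rfl fun j _ => Finset.sum_congr rfl fun i _ => by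
      rw [YAux.alpha_symm m T s j i]
  have hsplit : ∀ j i, -((qs s i + qs s j) / 9) * alphaT m T s i j
      = (-(1:ℝ)/9) * (qs s i * alphaT m T s i j)
        + (-(1:ℝ)/9) * (qs s j * alphaT m T s i j) := by
    intros; ring
  have eA : ∑ j ∈ I, ∑ i ∈ I.filter (· ≠ j), -((qs s i + qs s j) / 9) * alphaT m T s i j
      = (-(1:ℝ)/9) * (∑ j ∈ I, ∑ i ∈ I.filter (· ≠ j), qs s i * alphaT m T s i j)
        + (-(1:ℝ)/9) * (∑ j ∈ I, ∑ i ∈ I.filter (· ≠ j), qs s j * alphaT m T s i j) := by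
    rw [Finset.mul_sum, Finset.mul_sum, ← Finset.sum_add_distrib]
    refine Finset.sum_congr rfl fun j _ => ?_
    rw [Finset.mul_sum, Finset.mul_sum, ← Finset.sum_add_distrib]
    exact Finset.sum_congr rfl fun i _ => hsplit j i
  have eQ : ∑ j ∈ I, qs s j * (-2/3) = (-2/3) * ∑ j ∈ I, qs s j := by
    rw [← Finset.sum_mul]; ring
  rw [h1, hmid, eA, hS1, hS2, eQ]
  ring
end

section
/- With the notation of the previous statement, for real variables x_1,...,x_d: 3 Σ_{j=1}^d Σ_{i≠j} Σ_{k≠i,j} x_j Y(i,j,k) + (1/3) Σ_{j=1}^d Σ_{i≠j} α_T(i,j) x_j (q_i + 2 q_j) + (2/9) Σ_{j=1}^d q_j x_j = 0. -/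
open Finset

section Aux

open Finset

variable {m d : ℕ} {s : ℕ → ℕ} {μ : YoungDiagram} {T : SemistandardYoungTableau μ}

/-- columns containing `i` -/
def colsOf (m : ℕ) {μ : YoungDiagram} (T : SemistandardYoungTableau μ) (i : ℕ) : Finset ℕ :=
  (Finset.range 3).filter (fun c => ∃ r ∈ Finset.range m, T r c = i)

lemma psi_eq_card_inter {i j : ℕ} (hij : i ≠ j) :
    psi m T i j = (colsOf m T i ∩ colsOf m T j).card := by
  rw [psi, if_neg hij, colsOf, colsOf, ← Finset.filter_and]

lemma psi_symm_s9 (i j : ℕ) : psi m T i j = psi m T j i := by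
  rcases eq_or_ne i j with h | h
  · simp [psi, h]
  · rw [psi, psi, if_neg h, if_neg h.symm]
    congr 1
    ext c
    simp only [Finset.mem_filter]
    tauto

lemma value_mem_Icc (hrect : μ.cells = Finset.range m ×ˢ Finset.range 3)
    (hT : hasContent T d s) {r c : ℕ} (hr : r < m) (hc : c < 3) :
    T r c ∈ Finset.Icc 1 d := by
  by_contra h
  have h0 := hT (T r c)
  rw [if_neg h] at h0
  have hmem : (r, c) ∈ μ.cells.filter (fun p => T p.1 p.2 = T r c) := by
    rw [Finset.mem_filter, hrect, Finset.mem_product, Finset.mem_range, Finset.mem_range]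
    exact ⟨⟨hr, hc⟩, rfl⟩
  have := Finset.card_pos.mpr ⟨_, hmem⟩
  omega

lemma injOn_col (hrect : μ.cells = Finset.range m ×ˢ Finset.range 3) {c : ℕ} (hc : c < 3) :
    Set.InjOn (fun r => T r c) (Finset.range m : Set ℕ) := by
  intro a ha b hb hab
  simp only [Finset.coe_range, Set.mem_Iio] at ha hb
  by_contra hne
  have hcell : ∀ r : ℕ, r < m → (r, c) ∈ μ := by
    intro r hr
    rw [← YoungDiagram.mem_cells, hrect, Finset.mem_product, Finset.mem_range, Finset.mem_range]
    exact ⟨hr, hc⟩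
  rcases Nat.lt_or_ge a b with h | h
  · exact absurd hab (ne_of_lt (T.col_strict h (hcell b hb)))
  · have h' : b < a := lt_of_le_of_ne h (Ne.symm hne)
    exact absurd hab.symm (ne_of_lt (T.col_strict h' (hcell a ha)))

lemma card_colsOf (hrect : μ.cells = Finset.range m ×ˢ Finset.range 3)
    (hT : hasContent T d s) {i : ℕ} (hi : i ∈ Finset.Icc 1 d) :
    (colsOf m T i).card = s i := by
  have h0 := hT i
  rw [if_pos hi] at h0
  rw [← h0]
  have himg : (μ.cells.filter (fun p => T p.1 p.2 = i)).image Prod.snd = colsOf m T i := by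
    ext c
    constructor
    · intro hcmem
      obtain ⟨p, hp, rfl⟩ := Finset.mem_image.mp hcmem
      obtain ⟨hpc, hval⟩ := Finset.mem_filter.mp hp
      rw [hrect, Finset.mem_product, Finset.mem_range, Finset.mem_range] at hpc
      exact Finset.mem_filter.mpr ⟨Finset.mem_range.mpr hpc.2, p.1, Finset.mem_range.mpr hpc.1, hval⟩
    · intro hcmem
      obtain ⟨hc3, r, hr, hval⟩ := Finset.mem_filter.mp hcmem
      refine Finset.mem_image.mpr ⟨(r, c), Finset.mem_filter.mpr ⟨?_, hval⟩, rfl⟩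
      rw [hrect, Finset.mem_product]
      exact ⟨hr, hc3⟩
  rw [← himg]
  apply Finset.card_image_of_injOn
  intro a ha b hb hab
  rw [Finset.mem_coe, Finset.mem_filter, hrect, Finset.mem_product] at ha hb
  obtain ⟨⟨ha1, ha2⟩, haval⟩ := ha
  obtain ⟨⟨hb1, hb2⟩, hbval⟩ := hb
  rw [Finset.mem_range] at ha1 ha2 hb1 hb2
  have heq : T a.1 a.2 = T b.1 a.2 := by rw [haval, hab, hbval]
  have h := injOn_col (T := T) hrect ha2 (by simpa using ha1) (by simpa using hb1) heq
  exact Prod.ext h hab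

lemma colValues_mem {c k : ℕ} (hc : c < 3) :
    c ∈ colsOf m T k ↔ k ∈ (Finset.range m).image (fun r => T r c) := by
  simp [colsOf, Finset.mem_range.mpr hc, eq_comm]

lemma sum_psi (hrect : μ.cells = Finset.range m ×ˢ Finset.range 3)
    (hT : hasContent T d s) {j : ℕ} (hj : j ∈ Finset.Icc 1 d) :
    ∑ k ∈ (Finset.Icc 1 d).erase j, psi m T j k = s j * (m - 1) := by
  have hstep : ∀ k ∈ (Finset.Icc 1 d).erase j,
      psi m T j k = ∑ c ∈ colsOf m T j, if c ∈ colsOf m T k then 1 else 0 := by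
    intro k hk
    have hkj : j ≠ k := ((Finset.mem_erase.mp hk).1).symm
    rw [psi_eq_card_inter hkj, ← Finset.filter_mem_eq_inter, Finset.card_filter]
  rw [Finset.sum_congr rfl hstep, Finset.sum_comm]
  have hinner : ∀ c ∈ colsOf m T j,
      (∑ k ∈ (Finset.Icc 1 d).erase j, if c ∈ colsOf m T k then 1 else 0) = m - 1 := by
    intro c hc
    rw [← Finset.card_filter]
    have hc3 : c < 3 := Finset.mem_range.mp (Finset.mem_filter.mp hc).1
    have hfe : ((Finset.Icc 1 d).erase j).filter (fun k => c ∈ colsOf m T k)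
        = ((Finset.range m).image (fun r => T r c)).erase j := by
      ext k
      simp only [Finset.mem_filter, Finset.mem_erase, Finset.mem_image, colsOf,
        Finset.mem_range]
      constructor
      · rintro ⟨⟨hkj, hkd⟩, -, r, hr, hval⟩
        exact ⟨hkj, r, hr, hval⟩
      · rintro ⟨hkj, r, hr, hval⟩
        exact ⟨⟨hkj, hval ▸ value_mem_Icc hrect hT hr hc3⟩, hc3, r, hr, hval⟩
    rw [hfe, Finset.card_erase_of_mem, Finset.card_image_of_injOn (injOn_col hrect hc3),
      Finset.card_range]
    rw [← colValues_mem hc3]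
    exact hc
  rw [Finset.sum_congr rfl hinner, Finset.sum_const, card_colsOf hrect hT hj, smul_eq_mul]

lemma qs_sq (i : ℕ) : qs s i * qs s i = 1 := by
  rw [qs, ← pow_add]
  exact Even.neg_one_pow ⟨s i + 1, by ring⟩

lemma alphaT_symm_s9 (i j : ℕ) : alphaT m T s i j = alphaT m T s j i := by
  rw [alphaT, alphaT, psi_symm_s9, mul_comm]

lemma sum_alphaT (hs : ∀ i ∈ Finset.Icc 1 d, s i = 1 ∨ s i = 2)
    (hsum : ∑ i ∈ Finset.Icc 1 d, s i = 3 * m)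
    (hrect : μ.cells = Finset.range m ×ˢ Finset.range 3)
    (hT : hasContent T d s) {j : ℕ} (hj : j ∈ Finset.Icc 1 d) :
    ∑ k ∈ (Finset.Icc 1 d).erase j, alphaT m T s j k = -2/3 := by
  have hm : 1 ≤ m := by
    by_contra hm
    have hm0 : m = 0 := by omega
    have hle : s j ≤ ∑ i ∈ Finset.Icc 1 d, s i :=
      Finset.single_le_sum (fun i _ => Nat.zero_le _) hj
    rcases hs j hj with h | h <;> omega
  have hsk : ∑ k ∈ (Finset.Icc 1 d).erase j, (s k : ℝ) = 3 * m - s j := by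
    have := Finset.sum_erase_add (Finset.Icc 1 d) s hj
    have : ∑ k ∈ (Finset.Icc 1 d).erase j, s k = 3 * m - s j := by omega
    rw [← Nat.cast_sum, this]
    have hsj : s j ≤ 3 * m := by
      have hle : s j ≤ ∑ i ∈ Finset.Icc 1 d, s i :=
        Finset.single_le_sum (fun i _ => Nat.zero_le _) hj
      omega
    push_cast [Nat.cast_sub hsj]
    ring
  have hpsi : ∑ k ∈ (Finset.Icc 1 d).erase j, (psi m T j k : ℝ) = s j * (m - 1) := by
    rw [← Nat.cast_sum, sum_psi hrect hT hj]
    push_cast [Nat.cast_sub hm]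
    ring
  simp only [alphaT]
  rw [Finset.sum_sub_distrib, hpsi]
  have : ∑ k ∈ (Finset.Icc 1 d).erase j, (s j : ℝ) * (s k : ℝ) / 3
      = (s j : ℝ) * (3 * m - s j) / 3 := by
    rw [← Finset.sum_div, ← Finset.mul_sum, hsk]
  rw [this]
  rcases hs j hj with h | h <;> rw [h] <;> push_cast <;> ring

lemma alphaT_quad (hs : ∀ i ∈ Finset.Icc 1 d, s i = 1 ∨ s i = 2)
    (hrect : μ.cells = Finset.range m ×ˢ Finset.range 3)
    (hT : hasContent T d s) {i j : ℕ} (hi : i ∈ Finset.Icc 1 d)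
    (hj : j ∈ Finset.Icc 1 d) (hij : i ≠ j) :
    alphaT m T s i j ^ 2 = (qs s i * qs s j / 3) * alphaT m T s i j + 2/9 := by
  have h1 : psi m T i j ≤ s i := by
    rw [psi_eq_card_inter hij, ← card_colsOf hrect hT hi]
    exact Finset.card_le_card (Finset.inter_subset_left)
  have h2 : psi m T i j ≤ s j := by
    rw [psi_eq_card_inter hij, ← card_colsOf hrect hT hj]
    exact Finset.card_le_card (Finset.inter_subset_right)
  have h3 : s i + s j ≤ 3 + psi m T i j := by
    have hu : (colsOf m T i ∪ colsOf m T j).card ≤ 3 := by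
      have : colsOf m T i ∪ colsOf m T j ⊆ Finset.range 3 :=
        Finset.union_subset (Finset.filter_subset _ _) (Finset.filter_subset _ _)
      simpa using Finset.card_le_card this
    have := Finset.card_inter_add_card_union (colsOf m T i) (colsOf m T j)
    rw [card_colsOf hrect hT hi, card_colsOf hrect hT hj] at this
    rw [psi_eq_card_inter hij]
    omega
  rcases hs i hi with hsi | hsi <;> rcases hs j hj with hsj | hsj <;>
    simp only [alphaT, qs, hsi, hsj] <;>
    set a := psi m T i j with ha <;>
    have hb : a ≤ 2 := by omega
  all_goals interval_cases a <;> first | omega | norm_num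

end Aux
/-- the weighted sum identity
`3 Σ_j Σ_{i≠j} Σ_{k≠i,j} x_j Y(i,j,k) + (1/3) Σ_j Σ_{i≠j} α_T(i,j) x_j (q_i + 2 q_j)
  + (2/9) Σ_j q_j x_j = 0`. -/
theorem Y_weighted_sum_identity
    (m d : ℕ) (s : ℕ → ℕ)
    (hs : ∀ i ∈ Finset.Icc 1 d, s i = 1 ∨ s i = 2)
    (hsum : ∑ i ∈ Finset.Icc 1 d, s i = 3 * m)
    (μ : YoungDiagram) (hrect : μ.cells = Finset.range m ×ˢ Finset.range 3)
    (T : SemistandardYoungTableau μ) (hT : hasContent T d s)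
    (x : ℕ → ℝ) :
    3 * (∑ j ∈ Finset.Icc 1 d, ∑ i ∈ (Finset.Icc 1 d).filter (· ≠ j),
        ∑ k ∈ (Finset.Icc 1 d).filter (fun k => k ≠ i ∧ k ≠ j), x j * Yfun m T s i j k)
    + (1/3) * ∑ j ∈ Finset.Icc 1 d, ∑ i ∈ (Finset.Icc 1 d).filter (· ≠ j),
        alphaT m T s i j * x j * (qs s i + 2 * qs s j)
    + (2/9) * ∑ j ∈ Finset.Icc 1 d, qs s j * x j = 0 := by
  classical
  have hfil1 : ∀ j : ℕ, (Finset.Icc 1 d).filter (· ≠ j) = (Finset.Icc 1 d).erase j :=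
    fun j => Finset.filter_ne' _ j
  have hfil2 : ∀ i j : ℕ, ((Finset.Icc 1 d).filter fun k => k ≠ i ∧ k ≠ j)
      = ((Finset.Icc 1 d).erase j).erase i := by
    intro i j; ext k
    simp only [Finset.mem_filter, Finset.mem_erase]
    tauto
  simp only [hfil1, hfil2]
  rw [Finset.mul_sum, Finset.mul_sum, Finset.mul_sum, ← Finset.sum_add_distrib,
    ← Finset.sum_add_distrib]
  apply Finset.sum_eq_zero
  intro j hj
  have hk : ∀ i ∈ (Finset.Icc 1 d).erase j,
      ∑ k ∈ ((Finset.Icc 1 d).erase j).erase i, x j * Yfun m T s i j k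
      = x j * (-(qs s j / 9) * alphaT m T s i j * (1 + qs s i * qs s j)) := by
    intro i hi
    obtain ⟨hij, hiE⟩ := Finset.mem_erase.mp hi
    rw [← Finset.mul_sum]
    congr 1
    have hS1 : ∑ k ∈ ((Finset.Icc 1 d).erase j).erase i, alphaT m T s j k
        = -2/3 - alphaT m T s i j := by
      have h := Finset.sum_erase_add ((Finset.Icc 1 d).erase j)
        (fun k => alphaT m T s j k) hi
      rw [sum_alphaT hs hsum hrect hT hj] at h
      rw [alphaT_symm_s9 i j]
      linarith
    have hS2 : ∑ k ∈ ((Finset.Icc 1 d).erase j).erase i, alphaT m T s i k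
        = -2/3 - alphaT m T s i j := by
      rw [Finset.erase_right_comm]
      have hjmem : j ∈ (Finset.Icc 1 d).erase i :=
        Finset.mem_erase.mpr ⟨Ne.symm hij, hj⟩
      have h := Finset.sum_erase_add ((Finset.Icc 1 d).erase i)
        (fun k => alphaT m T s i k) hjmem
      rw [sum_alphaT hs hsum hrect hT hiE] at h
      linarith
    have hsum' : ∑ k ∈ ((Finset.Icc 1 d).erase j).erase i, Yfun m T s i j k
        = (qs s j / 3) * (alphaT m T s i j * (-2/3 - alphaT m T s i j)
            - (-2/3 - alphaT m T s i j) / 3) := by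
      simp only [Yfun]
      rw [← Finset.mul_sum, Finset.sum_sub_distrib, ← Finset.mul_sum, ← Finset.sum_div,
        hS1, hS2]
    rw [hsum']
    have hq := alphaT_quad hs hrect hT hiE hj hij
    linear_combination (-(qs s j)/3) * hq
  rw [Finset.sum_congr rfl hk, Finset.mul_sum, Finset.mul_sum, ← Finset.sum_add_distrib]
  have hterm : ∀ i ∈ (Finset.Icc 1 d).erase j,
      3 * (x j * (-(qs s j / 9) * alphaT m T s i j * (1 + qs s i * qs s j)))
        + 1/3 * (alphaT m T s i j * x j * (qs s i + 2 * qs s j))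
      = qs s j * x j / 3 * alphaT m T s i j := by
    intro i _
    have h1 := qs_sq (s := s) j
    linear_combination (-(x j * alphaT m T s i j * qs s i)/3) * h1
  rw [Finset.sum_congr rfl hterm, ← Finset.mul_sum]
  have halpha : ∑ i ∈ (Finset.Icc 1 d).erase j, alphaT m T s i j = -2/3 := by
    rw [Finset.sum_congr rfl (fun i _ => alphaT_symm_s9 (m := m) (T := T) (s := s) i j)]
    exact sum_alphaT hs hsum hrect hT hj
  rw [halpha]
  ring
end
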